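/- arXiv:2509.00205 — 12 statements merged into one kernel-verified Lean document; each statement's English description precedes it below -/
import Mathlib

section
/- Let (X,d) be an ultrametric space. For all distinct closed balls B̄₁, B̄₂ in X, the Hausdorff distance satisfies d_H(B̄₁, B̄₂) = diam(B̄₁ ∪ B̄₂). -/
open Metric Set

/-- The set of all closed balls (with nonnegative radius) of a metric space. -/
def ClosedBalls (X : Type*) [MetricSpace X] : Set (Set X) :=
  {B | ∃ (c : X) (r : ℝ), 0 ≤ r ∧ B = Metric.closedBall c r}

private lemma le_infDist_aux {X : Type*} [MetricSpace X] {s : Set X} (hs : s.Nonempty)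
    {x : X} {b : ℝ} (h : ∀ y ∈ s, b ≤ dist x y) : b ≤ Metric.infDist x s := by
  rw [Metric.infDist_eq_iInf]
  haveI : Nonempty s := hs.to_subtype
  exact le_ciInf fun y => h y y.2

/-- key ultrametric fact: if `x` is outside the ball, its distance to every point of the
ball is at least `dist x c`. -/
private lemma dist_ge_of_not_mem {X : Type*} [MetricSpace X]
    (hu : ∀ x y z : X, dist x y ≤ max (dist x z) (dist z y))
    {c x y : X} {r : ℝ} (hx : r < dist x c) (hy : y ∈ Metric.closedBall c r) :
    dist x c ≤ dist x y := by
  have h1 := hu x c y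
  have h2 : dist y c ≤ r := Metric.mem_closedBall.1 hy
  rcases le_max_iff.1 h1 with h | h
  · exact h
  · linarith

/-- In an ultrametric space, for distinct closed balls the Hausdorff distance equals the
diameter of their union. -/
theorem stmt5 {X : Type*} [MetricSpace X]
    (hu : ∀ x y z : X, dist x y ≤ max (dist x z) (dist z y))
    {B₁ B₂ : Set X} (h1 : B₁ ∈ ClosedBalls X) (h2 : B₂ ∈ ClosedBalls X) (hne : B₁ ≠ B₂) :
    Metric.hausdorffDist B₁ B₂ = Metric.diam (B₁ ∪ B₂) := by
  obtain ⟨c₁, r₁, hr₁, rfl⟩ := h1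
  obtain ⟨c₂, r₂, hr₂, rfl⟩ := h2
  have hne₁ : (Metric.closedBall c₁ r₁).Nonempty := ⟨c₁, Metric.mem_closedBall_self hr₁⟩
  have hne₂ : (Metric.closedBall c₂ r₂).Nonempty := ⟨c₂, Metric.mem_closedBall_self hr₂⟩
  have hb₁ : Bornology.IsBounded (Metric.closedBall c₁ r₁) := Metric.isBounded_closedBall
  have hb₂ : Bornology.IsBounded (Metric.closedBall c₂ r₂) := Metric.isBounded_closedBall
  have hfin : EMetric.hausdorffEdist (Metric.closedBall c₁ r₁) (Metric.closedBall c₂ r₂) ≠ ⊤ :=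
    Metric.hausdorffEdist_ne_top_of_nonempty_of_bounded hne₁ hne₂ hb₁ hb₂
  refine le_antisymm (Metric.hausdorffDist_le_diam hne₁ hb₁ hne₂ hb₂) ?_
  -- it remains to show `diam (B₁ ∪ B₂) ≤ hausdorffDist B₁ B₂`
  by_cases hdisj : (Metric.closedBall c₁ r₁ ∩ Metric.closedBall c₂ r₂) = ∅
  · -- disjoint case: all cross distances equal `dist c₁ c₂ > max r₁ r₂`
    have hd2 : r₂ < dist c₁ c₂ := by
      by_contra h
      push_neg at h
      have : c₁ ∈ Metric.closedBall c₁ r₁ ∩ Metric.closedBall c₂ r₂ :=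
        ⟨Metric.mem_closedBall_self hr₁, Metric.mem_closedBall.2 h⟩
      simp [hdisj] at this
    have hd1 : r₁ < dist c₂ c₁ := by
      by_contra h
      push_neg at h
      have : c₂ ∈ Metric.closedBall c₁ r₁ ∩ Metric.closedBall c₂ r₂ :=
        ⟨Metric.mem_closedBall.2 h, Metric.mem_closedBall_self hr₂⟩
      simp [hdisj] at this
    have hdH : dist c₁ c₂ ≤ Metric.hausdorffDist (Metric.closedBall c₁ r₁) (Metric.closedBall c₂ r₂) := by
      refine le_trans ?_ (Metric.infDist_le_hausdorffDist_of_mem (Metric.mem_closedBall_self hr₁) hfin)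
      exact le_infDist_aux hne₂ fun y hy => dist_ge_of_not_mem hu hd2 hy
    refine le_trans (Metric.diam_le_of_forall_dist_le (C := dist c₁ c₂) dist_nonneg ?_) hdH
    intro a ha b hb
    have key : ∀ x ∈ Metric.closedBall c₁ r₁ ∪ Metric.closedBall c₂ r₂, dist x c₁ ≤ dist c₁ c₂ := by
      intro x hx
      rcases hx with hx | hx
      · calc dist x c₁ ≤ r₁ := hx
          _ ≤ dist c₂ c₁ := hd1.le
          _ = dist c₁ c₂ := dist_comm _ _
      · calc dist x c₁ ≤ max (dist x c₂) (dist c₂ c₁) := hu x c₁ c₂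
          _ ≤ dist c₁ c₂ := by
              rw [dist_comm c₂ c₁]
              exact max_le (le_trans hx hd2.le) le_rfl
    calc dist a b ≤ max (dist a c₁) (dist c₁ b) := hu a b c₁
      _ ≤ dist c₁ c₂ := max_le (key a ha) (dist_comm c₁ b ▸ key b hb)
  · -- overlapping case: one ball is contained in the other
    obtain ⟨z, hz₁, hz₂⟩ := Set.nonempty_iff_ne_empty.2 hdisj
    -- reduce to the case `B₁ ⊆ B₂` by a symmetric argument
    have main : ∀ (c₁ c₂ : X) (r₁ r₂ : ℝ), 0 ≤ r₁ →
        (∃ z, z ∈ Metric.closedBall c₁ r₁ ∧ z ∈ Metric.closedBall c₂ r₂) → r₁ ≤ r₂ →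
        Metric.closedBall c₁ r₁ ≠ Metric.closedBall c₂ r₂ →
        Metric.diam (Metric.closedBall c₁ r₁ ∪ Metric.closedBall c₂ r₂) ≤
          Metric.hausdorffDist (Metric.closedBall c₁ r₁) (Metric.closedBall c₂ r₂) := by
      intro c₁ c₂ r₁ r₂ hr₁ ⟨z, hz₁, hz₂⟩ hr hball
      have hsub : Metric.closedBall c₁ r₁ ⊆ Metric.closedBall c₂ r₂ := by
        intro x hx
        have : dist x c₂ ≤ max (dist x z) (dist z c₂) := hu x c₂ z
        have hxz : dist x z ≤ r₁ := by
          calc dist x z ≤ max (dist x c₁) (dist c₁ z) := hu x z c₁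
            _ ≤ r₁ := max_le hx (dist_comm c₁ z ▸ hz₁)
        exact Metric.mem_closedBall.2 (le_trans this (max_le (le_trans hxz hr) hz₂))
      have hne₁ : (Metric.closedBall c₁ r₁).Nonempty := ⟨c₁, Metric.mem_closedBall_self hr₁⟩
      have hfin : EMetric.hausdorffEdist (Metric.closedBall c₁ r₁) (Metric.closedBall c₂ r₂) ≠ ⊤ :=
        Metric.hausdorffEdist_ne_top_of_nonempty_of_bounded hne₁ (hne₁.mono hsub)
          Metric.isBounded_closedBall Metric.isBounded_closedBall
      obtain ⟨x₀, hx₀₂, hx₀₁⟩ : ∃ x₀, x₀ ∈ Metric.closedBall c₂ r₂ ∧ x₀ ∉ Metric.closedBall c₁ r₁ := by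
        by_contra h
        push_neg at h
        exact hball (le_antisymm hsub h)
      have hx₀ : r₁ < dist x₀ c₁ := lt_of_not_ge fun h => hx₀₁ (Metric.mem_closedBall.2 h)
      -- key: for a, b ∈ B₂ with dist b c₁ ≤ dist a c₁, dist a b ≤ hausdorffDist
      have key : ∀ a b : X, a ∈ Metric.closedBall c₂ r₂ → b ∈ Metric.closedBall c₂ r₂ →
          dist b c₁ ≤ dist a c₁ →
          dist a b ≤ Metric.hausdorffDist (Metric.closedBall c₂ r₂) (Metric.closedBall c₁ r₁) := by
        intro a b ha hb hab
        have hmax : dist a b ≤ dist a c₁ := by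
          have := hu a b c₁
          rw [dist_comm c₁ b] at this
          exact le_trans this (max_le le_rfl hab)
        by_cases ha₁ : a ∈ Metric.closedBall c₁ r₁
        · -- then a, b ∈ B₁, so dist a b ≤ r₁ < dist x₀ c₁ ≤ infDist x₀ B₁ ≤ d_H
          have hab' : dist a b ≤ r₁ := le_trans hmax ha₁
          refine le_trans (le_trans hab' hx₀.le) ?_
          refine le_trans ?_ (Metric.infDist_le_hausdorffDist_of_mem hx₀₂
            (by rw [Metric.hausdorffEDist_comm]; exact hfin))
          exact le_infDist_aux hne₁ fun y hy => dist_ge_of_not_mem hu hx₀ hy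
        · have ha' : r₁ < dist a c₁ := lt_of_not_ge fun h => ha₁ (Metric.mem_closedBall.2 h)
          refine le_trans hmax ?_
          refine le_trans ?_ (Metric.infDist_le_hausdorffDist_of_mem ha
            (by rw [Metric.hausdorffEDist_comm]; exact hfin))
          exact le_infDist_aux hne₁ fun y hy => dist_ge_of_not_mem hu ha' hy
      rw [Metric.hausdorffDist_comm]
      refine Metric.diam_le_of_forall_dist_le Metric.hausdorffDist_nonneg ?_
      intro a ha b hb
      have ha₂ : a ∈ Metric.closedBall c₂ r₂ := by rcases ha with h | h; exacts [hsub h, h]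
      have hb₂ : b ∈ Metric.closedBall c₂ r₂ := by rcases hb with h | h; exacts [hsub h, h]
      rcases le_total (dist b c₁) (dist a c₁) with h | h
      · exact key a b ha₂ hb₂ h
      · rw [dist_comm]
        exact key b a hb₂ ha₂ h
    rcases le_total r₁ r₂ with hr | hr
    · exact main c₁ c₂ r₁ r₂ hr₁ ⟨z, hz₁, hz₂⟩ hr hne
    · rw [Metric.hausdorffDist_comm, Set.union_comm]
      exact main c₂ c₁ r₂ r₁ hr₂ ⟨z, hz₂, hz₁⟩ hr hne.symm
end

section
/- Let (X,d) be an ultrametric space and let B̄₁, B̄₂ be distinct closed balls with strictly positive radii (i.e., balls B̄_r(c) with r > 0). Then d_H(B̄₁, B̄₂) equals dist(B̄₁, B̄₂) = inf{d(x,y) : x ∈ B̄₁, y ∈ B̄₂} if B̄₁ ∩ B̄₂ = ∅, and equals max{diam B̄₁, diam B̄₂} if B̄₁ ∩ B̄₂ ≠ ∅. -/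
open Metric

section aux
variable {X : Type*} [MetricSpace X]

/-- Any point of a closed ball is a center in an ultrametric space. -/
lemma ultra_ball_eq (hu : ∀ x y z : X, dist x y ≤ max (dist x z) (dist z y))
    {c z : X} {r : ℝ} (hz : z ∈ closedBall c r) : closedBall z r = closedBall c r := by
  have key : ∀ u v : X, u ∈ closedBall c r → dist v u ≤ r → v ∈ closedBall c r := by
    intro u v hu' hv
    have := hu v c u
    simp only [mem_closedBall] at *
    exact this.trans (max_le hv hu')
  ext x
  simp only [mem_closedBall] at *
  constructor
  · intro hx
    exact key z x hz hx
  · intro hx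
    have hz' : dist z c ≤ r := hz
    have := hu x z c
    rw [dist_comm c z] at this
    exact this.trans (max_le hx hz')

lemma ultra_out_gt (hu : ∀ x y z : X, dist x y ≤ max (dist x z) (dist z y))
    {c x y : X} {r : ℝ} (hx : x ∈ closedBall c r) (hy : y ∉ closedBall c r) :
    r < dist y x := by
  by_contra h
  push_neg at h
  have : y ∈ closedBall x r := by simpa [mem_closedBall] using h
  rw [ultra_ball_eq hu hx] at this
  exact hy this

/-- Isosceles: if dist x x' < dist x y then dist x' y = dist x y. -/
lemma ultra_isoc (hu : ∀ x y z : X, dist x y ≤ max (dist x z) (dist z y))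
    {x x' y : X} (h : dist x x' < dist x y) : dist x' y = dist x y := by
  have h1 : dist x' y ≤ dist x y := by
    have := hu x' y x
    rw [dist_comm x' x] at this
    exact this.trans (max_le h.le le_rfl)
  have h2 : dist x y ≤ dist x' y := by
    have := hu x y x'
    rcases max_cases (dist x x') (dist x' y) with ⟨he, _⟩ | ⟨he, _⟩
    · rw [he] at this; exact absurd this (not_le.mpr h)
    · rw [he] at this; exact this
  exact le_antisymm h1 h2

/-- distances between a ball and points outside it are "constant along the ball". -/
lemma ultra_const (hu : ∀ x y z : X, dist x y ≤ max (dist x z) (dist z y))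
    {c x x' y : X} {r : ℝ} (hx : x ∈ closedBall c r) (hx' : x' ∈ closedBall c r)
    (hy : y ∉ closedBall c r) : dist x' y = dist x y := by
  have hlt : dist x x' < dist x y := by
    have h1 : dist x x' ≤ r := by
      have := hu x x' c
      rw [dist_comm c x'] at this
      exact this.trans (max_le hx hx')
    have h2 : r < dist x y := by
      have := ultra_out_gt hu hx hy
      rwa [dist_comm] at this
    exact h1.trans_lt h2
  exact ultra_isoc hu hlt

end aux

/-- The set of all closed balls of strictly positive radius of a metric space. -/
def PosBalls (X : Type*) [MetricSpace X] : Set (Set X) :=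
  {B | ∃ (c : X) (r : ℝ), 0 < r ∧ B = Metric.closedBall c r}

/-- For distinct closed balls of strictly positive radii in an ultrametric space, the
Hausdorff distance equals the infimum distance between the balls if they are disjoint,
and the maximum of their diameters otherwise. -/
theorem stmt6 {X : Type*} [MetricSpace X]
    (hu : ∀ x y z : X, dist x y ≤ max (dist x z) (dist z y))
    {B₁ B₂ : Set X} (h1 : B₁ ∈ PosBalls X) (h2 : B₂ ∈ PosBalls X) (hne : B₁ ≠ B₂) :
    (Disjoint B₁ B₂ →
        Metric.hausdorffDist B₁ B₂ = sInf {d : ℝ | ∃ x ∈ B₁, ∃ y ∈ B₂, d = dist x y}) ∧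
    ((B₁ ∩ B₂).Nonempty →
        Metric.hausdorffDist B₁ B₂ = max (Metric.diam B₁) (Metric.diam B₂)) := by
  obtain ⟨c₁, r₁, hr₁, rfl⟩ := h1
  obtain ⟨c₂, r₂, hr₂, rfl⟩ := h2
  have hc₁ : c₁ ∈ closedBall c₁ r₁ := mem_closedBall_self hr₁.le
  have hc₂ : c₂ ∈ closedBall c₂ r₂ := mem_closedBall_self hr₂.le
  have hb₁ : Bornology.IsBounded (closedBall c₁ r₁) := isBounded_closedBall
  have hb₂ : Bornology.IsBounded (closedBall c₂ r₂) := isBounded_closedBall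
  have hfin : EMetric.hausdorffEdist (closedBall c₁ r₁) (closedBall c₂ r₂) ≠ ⊤ :=
    hausdorffEdist_ne_top_of_nonempty_of_bounded ⟨c₁, hc₁⟩ ⟨c₂, hc₂⟩ hb₁ hb₂
  constructor
  · -- disjoint case
    intro hd
    set D := dist c₁ c₂ with hD
    -- every cross distance equals D
    have hconst : ∀ x ∈ closedBall c₁ r₁, ∀ y ∈ closedBall c₂ r₂, dist x y = D := by
      intro x hx y hy
      have hyn : y ∉ closedBall c₁ r₁ := Set.disjoint_right.mp hd hy
      have hxn : x ∉ closedBall c₂ r₂ := Set.disjoint_left.mp hd hx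
      have e1 : dist x y = dist c₁ y := ultra_const hu hc₁ hx hyn
      have e2 : dist y c₁ = dist c₂ c₁ := ultra_const hu hc₂ hy
        (Set.disjoint_left.mp hd hc₁)
      rw [e1, dist_comm c₁ y, e2, dist_comm]
    have hset : {d : ℝ | ∃ x ∈ closedBall c₁ r₁, ∃ y ∈ closedBall c₂ r₂, d = dist x y} = {D} := by
      ext d
      simp only [Set.mem_setOf_eq, Set.mem_singleton_iff]
      constructor
      · rintro ⟨x, hx, y, hy, rfl⟩; exact hconst x hx y hy
      · rintro rfl; exact ⟨c₁, hc₁, c₂, hc₂, (hconst c₁ hc₁ c₂ hc₂).symm⟩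
    rw [hset, csInf_singleton]
    apply le_antisymm
    · apply hausdorffDist_le_of_mem_dist dist_nonneg
      · exact fun x hx => ⟨c₂, hc₂, (hconst x hx c₂ hc₂).le⟩
      · intro y hy
        refine ⟨c₁, hc₁, ?_⟩
        rw [dist_comm]
        exact (hconst c₁ hc₁ y hy).le
    · have hinf : D ≤ infDist c₁ (closedBall c₂ r₂) := by
        by_contra h
        push_neg at h
        obtain ⟨y, hy, hlt⟩ := (infDist_lt_iff ⟨c₂, hc₂⟩).mp h
        rw [hconst c₁ hc₁ y hy] at hlt
        exact lt_irrefl _ hlt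
      exact hinf.trans (infDist_le_hausdorffDist_of_mem hc₁ hfin)
  · -- intersecting case
    intro ⟨z, hz₁, hz₂⟩
    -- WLOG via symmetry: prove a general claim
    have key : ∀ (a₁ a₂ : X) (s₁ s₂ : ℝ), 0 < s₁ → 0 < s₂ → s₁ ≤ s₂ →
        ∀ w : X, w ∈ closedBall a₁ s₁ → w ∈ closedBall a₂ s₂ →
        closedBall a₁ s₁ ≠ closedBall a₂ s₂ →
        hausdorffDist (closedBall a₁ s₁) (closedBall a₂ s₂)
          = max (diam (closedBall a₁ s₁)) (diam (closedBall a₂ s₂)) := by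
      intro a₁ a₂ s₁ s₂ hs₁ hs₂ hle w hw₁ hw₂ hne'
      have hsub : closedBall a₁ s₁ ⊆ closedBall a₂ s₂ := by
        rw [← ultra_ball_eq hu hw₁, ← ultra_ball_eq hu hw₂]
        exact closedBall_subset_closedBall hle
      have hb₁' : Bornology.IsBounded (closedBall a₁ s₁) := isBounded_closedBall
      have hb₂' : Bornology.IsBounded (closedBall a₂ s₂) := isBounded_closedBall
      have hdm : max (diam (closedBall a₁ s₁)) (diam (closedBall a₂ s₂))
          = diam (closedBall a₂ s₂) :=
        max_eq_right (diam_mono hsub hb₂')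
      rw [hdm]
      have hfin' : EMetric.hausdorffEdist (closedBall a₁ s₁) (closedBall a₂ s₂) ≠ ⊤ :=
        hausdorffEdist_ne_top_of_nonempty_of_bounded ⟨w, hw₁⟩ ⟨w, hw₂⟩ hb₁' hb₂'
      -- there is a point of B₂ outside B₁
      obtain ⟨p, hp₂, hp₁⟩ : ∃ p, p ∈ closedBall a₂ s₂ ∧ p ∉ closedBall a₁ s₁ := by
        by_contra h
        push_neg at h
        exact hne' (Set.Subset.antisymm hsub h)
      -- infDist from any point of B₂ \ B₁ to B₁ equals dist to any point of B₁
      have hinf_eq : ∀ y, y ∉ closedBall a₁ s₁ → ∀ x ∈ closedBall a₁ s₁,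
          infDist y (closedBall a₁ s₁) = dist y x := by
        intro y hy x hx
        apply le_antisymm (infDist_le_dist_of_mem hx)
        by_contra h
        push_neg at h
        obtain ⟨x', hx', hlt⟩ := (infDist_lt_iff ⟨x, hx⟩).mp h
        rw [dist_comm y x', ultra_const hu hx hx' hy, dist_comm x y] at hlt
        exact lt_irrefl _ hlt
      -- each dist y x (y∈B₂ outside B₁, x∈B₁) is ≤ hausdorffDist
      have hle_haus : ∀ y ∈ closedBall a₂ s₂, ∀ x ∈ closedBall a₁ s₁,
          dist y x ≤ hausdorffDist (closedBall a₁ s₁) (closedBall a₂ s₂) := by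
        intro y hy x hx
        by_cases hyin : y ∈ closedBall a₁ s₁
        · -- dist y x ≤ s₁ < dist p x ≤ hausdorffDist
          have h1 : dist y x ≤ s₁ := by
            have := hu y x a₁
            rw [dist_comm a₁ x] at this
            exact this.trans (max_le hyin hx)
          have h2 : s₁ < dist p x := ultra_out_gt hu hx hp₁
          have h3 : dist p x ≤ hausdorffDist (closedBall a₁ s₁) (closedBall a₂ s₂) := by
            rw [← hinf_eq p hp₁ x hx, hausdorffDist_comm]
            exact infDist_le_hausdorffDist_of_mem hp₂ (by rwa [EMetric.hausdorffEdist_comm])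
          linarith
        · rw [← hinf_eq y hyin x hx, hausdorffDist_comm]
          exact infDist_le_hausdorffDist_of_mem hy (by rwa [EMetric.hausdorffEdist_comm])
      apply le_antisymm
      · refine hausdorffDist_le_of_mem_dist diam_nonneg ?_ ?_
        · exact fun x hx => ⟨x, hsub hx, by simpa using Metric.diam_nonneg⟩
        · intro y hy
          exact ⟨w, hw₁, dist_le_diam_of_mem hb₂' hy (hsub hw₁)⟩
      · apply diam_le_of_forall_dist_le hausdorffDist_nonneg
        intro u huB v hvB
        have h1 : dist u w ≤ hausdorffDist (closedBall a₁ s₁) (closedBall a₂ s₂) :=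
          hle_haus u huB w hw₁
        have h2 : dist w v ≤ hausdorffDist (closedBall a₁ s₁) (closedBall a₂ s₂) := by
          rw [dist_comm]; exact hle_haus v hvB w hw₁
        exact (hu u v w).trans (max_le h1 h2)
    rcases le_total r₁ r₂ with hle | hle
    · exact key c₁ c₂ r₁ r₂ hr₁ hr₂ hle z hz₁ hz₂ hne
    · rw [hausdorffDist_comm, max_comm]
      exact key c₂ c₁ r₂ r₁ hr₂ hr₁ hle z hz₂ hz₁ (Ne.symm hne)
end

section
/- Let (X,d) be a metric space. Then the Hausdorff distance d_H on the set of nonempty closed bounded subsets of X is an ultrametric if and only if d is an ultrametric on X. -/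
/-- The set of all nonempty closed bounded subsets of a metric space. -/
def MClosedBdd (X : Type*) [MetricSpace X] : Set (Set X) :=
  {A | A.Nonempty ∧ IsClosed A ∧ Bornology.IsBounded A}

open Metric

lemma hd_singleton {X : Type*} [MetricSpace X] (x y : X) :
    Metric.hausdorffDist {x} {y} = dist x y := by
  have hne : EMetric.hausdorffEdist ({x} : Set X) {y} ≠ ⊤ :=
    hausdorffEdist_ne_top_of_nonempty_of_bounded ⟨x, rfl⟩ ⟨y, rfl⟩
      Bornology.isBounded_singleton Bornology.isBounded_singleton
  apply le_antisymm
  · apply hausdorffDist_le_of_infDist dist_nonneg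
    · rintro a rfl; simp [infDist_singleton]
    · rintro b rfl; simp [infDist_singleton, dist_comm]
  · have := infDist_le_hausdorffDist_of_mem (Set.mem_singleton x) hne
    simpa [infDist_singleton] using this

/-- The Hausdorff distance is an ultrametric on the nonempty closed bounded subsets of `X`
iff `d` is an ultrametric on `X`. -/
theorem stmt8 {X : Type*} [MetricSpace X] :
    (∀ A ∈ MClosedBdd X, ∀ B ∈ MClosedBdd X, ∀ C ∈ MClosedBdd X,
        Metric.hausdorffDist A B ≤ max (Metric.hausdorffDist A C) (Metric.hausdorffDist C B))
      ↔ (∀ x y z : X, dist x y ≤ max (dist x z) (dist z y)) := by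
  constructor
  · intro H x y z
    have hs : ∀ a : X, ({a} : Set X) ∈ MClosedBdd X := fun a =>
      ⟨⟨a, rfl⟩, isClosed_singleton, Bornology.isBounded_singleton⟩
    have := H {x} (hs x) {y} (hs y) {z} (hs z)
    simpa [hd_singleton] using this
  · intro hult A hA B hB C hC
    obtain ⟨hAne, hAcl, hAbd⟩ := hA
    obtain ⟨hBne, hBcl, hBbd⟩ := hB
    obtain ⟨hCne, hCcl, hCbd⟩ := hC
    have hAC : EMetric.hausdorffEdist A C ≠ ⊤ :=
      hausdorffEdist_ne_top_of_nonempty_of_bounded hAne hCne hAbd hCbd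
    have hCB : EMetric.hausdorffEdist C B ≠ ⊤ :=
      hausdorffEdist_ne_top_of_nonempty_of_bounded hCne hBne hCbd hBbd
    set r := max (hausdorffDist A C) (hausdorffDist C B) with hr
    have hr0 : 0 ≤ r := le_trans hausdorffDist_nonneg (le_max_left _ _)
    -- key: one-sided bound
    have key : ∀ (S T U : Set X), T.Nonempty → U.Nonempty →
        EMetric.hausdorffEdist S T ≠ ⊤ → EMetric.hausdorffEdist T U ≠ ⊤ →
        ∀ x ∈ S, infDist x U ≤ max (hausdorffDist S T) (hausdorffDist T U) := by
      intro S T U hTne hUne hST hTU x hx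
      refine le_of_forall_pos_le_add fun ε hε => ?_
      have h1 : infDist x T ≤ hausdorffDist S T :=
        infDist_le_hausdorffDist_of_mem hx hST
      have h2 : infDist x T < hausdorffDist S T + ε / 2 := lt_of_le_of_lt h1 (by linarith)
      obtain ⟨t, htT, ht⟩ := (infDist_lt_iff hTne).1 h2
      have h3 : infDist t U ≤ hausdorffDist T U :=
        infDist_le_hausdorffDist_of_mem htT hTU
      have h4 : infDist t U < hausdorffDist T U + ε / 2 := lt_of_le_of_lt h3 (by linarith)
      obtain ⟨u, huU, hu⟩ := (infDist_lt_iff hUne).1 h4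
      have : dist x u ≤ max (dist x t) (dist t u) := hult x u t
      have hmax : max (dist x t) (dist t u)
          ≤ max (hausdorffDist S T) (hausdorffDist T U) + ε := by
        apply max_le
        · exact le_trans ht.le (by have := le_max_left (hausdorffDist S T) (hausdorffDist T U); linarith)
        · exact le_trans hu.le (by have := le_max_right (hausdorffDist S T) (hausdorffDist T U); linarith)
      calc infDist x U ≤ dist x u := infDist_le_dist_of_mem huU
        _ ≤ _ := le_trans this hmax
    apply hausdorffDist_le_of_infDist hr0
    · intro x hx
      exact key A C B hCne hBne hAC hCB x hx
    · intro y hy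
      have := key B C A hCne hAne (hausdorffEdist_ne_top_of_nonempty_of_bounded hBne hCne hBbd hCbd)
        (hausdorffEdist_ne_top_of_nonempty_of_bounded hCne hAne hCbd hAbd) y hy
      rw [show hausdorffDist B C = hausdorffDist C B from hausdorffDist_comm, show hausdorffDist C A = hausdorffDist A C from hausdorffDist_comm] at this
      rw [hr, max_comm]
      exact this
end

section
/- Let (X,d) be a metric space, and let B̄_X denote the set of all closed balls of X equipped with the Hausdorff metric d_H. Then (B̄_X, d_H) is an ultrametric space if and only if (X,d) is an ultrametric space. -/
lemma hausdorffEdist_singleton' {X : Type*} [MetricSpace X] (x y : X) :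
    Metric.hausdorffEDist ({x} : Set X) {y} = edist x y := by
  simp [Metric.hausdorffEDist_def, Metric.infEDist_singleton, edist_comm]

lemma hausdorffDist_singleton' {X : Type*} [MetricSpace X] (x y : X) :
    Metric.hausdorffDist ({x} : Set X) {y} = dist x y := by
  rw [Metric.hausdorffDist, hausdorffEdist_singleton', dist_edist]

/-- The Hausdorff distance is an ultrametric on the set of closed balls of `X`
iff `d` is an ultrametric on `X`. -/
theorem stmt9 {X : Type*} [MetricSpace X] :
    (∀ A ∈ ClosedBalls X, ∀ B ∈ ClosedBalls X, ∀ C ∈ ClosedBalls X,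
        Metric.hausdorffDist A B ≤ max (Metric.hausdorffDist A C) (Metric.hausdorffDist C B))
      ↔ (∀ x y z : X, dist x y ≤ max (dist x z) (dist z y)) := by
  constructor
  · intro h x y z
    have hx : ({x} : Set X) ∈ ClosedBalls X := ⟨x, 0, le_rfl, by simp⟩
    have hy : ({y} : Set X) ∈ ClosedBalls X := ⟨y, 0, le_rfl, by simp⟩
    have hz : ({z} : Set X) ∈ ClosedBalls X := ⟨z, 0, le_rfl, by simp⟩
    have := h _ hx _ hy _ hz
    simpa [hausdorffDist_singleton'] using this
  · intro hu A hA B hB C hC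
    obtain ⟨a, ra, hra, rfl⟩ := hA
    obtain ⟨b, rb, hrb, rfl⟩ := hB
    obtain ⟨c, rc, hrc, rfl⟩ := hC
    set A := Metric.closedBall a ra
    set B := Metric.closedBall b rb
    set C := Metric.closedBall c rc
    have hAne : A.Nonempty := ⟨a, Metric.mem_closedBall_self hra⟩
    have hBne : B.Nonempty := ⟨b, Metric.mem_closedBall_self hrb⟩
    have hCne : C.Nonempty := ⟨c, Metric.mem_closedBall_self hrc⟩
    have hAb := Metric.isBounded_closedBall (x := a) (r := ra)
    have hBb := Metric.isBounded_closedBall (x := b) (r := rb)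
    have hCb := Metric.isBounded_closedBall (x := c) (r := rc)
    have hAC : EMetric.hausdorffEdist A C ≠ ⊤ :=
      Metric.hausdorffEdist_ne_top_of_nonempty_of_bounded hAne hCne hAb hCb
    have hCB : EMetric.hausdorffEdist C B ≠ ⊤ :=
      Metric.hausdorffEdist_ne_top_of_nonempty_of_bounded hCne hBne hCb hBb
    set M := max (Metric.hausdorffDist A C) (Metric.hausdorffDist C B) with hM
    have hM0 : 0 ≤ M := le_trans Metric.hausdorffDist_nonneg (le_max_left _ _)
    refine le_of_forall_pos_le_add fun ε hε => ?_
    apply Metric.hausdorffDist_le_of_infDist (by linarith)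
    · intro x hx
      obtain ⟨w, hw, hxw⟩ := Metric.exists_dist_lt_of_hausdorffDist_lt hx
        (lt_of_le_of_lt (le_max_left _ (Metric.hausdorffDist C B))
          (lt_add_of_pos_right M hε)) hAC
      obtain ⟨v, hv, hwv⟩ := Metric.exists_dist_lt_of_hausdorffDist_lt hw
        (lt_of_le_of_lt (le_max_right (Metric.hausdorffDist A C) _)
          (lt_add_of_pos_right M hε)) hCB
      calc Metric.infDist x B ≤ dist x v := Metric.infDist_le_dist_of_mem hv
        _ ≤ max (dist x w) (dist w v) := hu x v w
        _ ≤ M + ε := max_le hxw.le hwv.le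
    · intro y hy
      obtain ⟨w, hw, hyw⟩ := Metric.exists_dist_lt_of_hausdorffDist_lt' hy
        (lt_of_le_of_lt (le_max_right (Metric.hausdorffDist A C) _)
          (lt_add_of_pos_right M hε)) hCB
      obtain ⟨v, hv, hwv⟩ := Metric.exists_dist_lt_of_hausdorffDist_lt' hw
        (lt_of_le_of_lt (le_max_left _ (Metric.hausdorffDist C B))
          (lt_add_of_pos_right M hε)) hAC
      calc Metric.infDist y A ≤ dist y v := Metric.infDist_le_dist_of_mem hv
        _ ≤ max (dist y w) (dist w v) := hu y v w
        _ ≤ M + ε := max_le (by rw [dist_comm]; exact hyw.le) (by rw [dist_comm]; exact hwv.le)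
end

section
/- Let (X,d) be an ultrametric space and let 𝐀 be a bounded subset of the space of closed balls (B̄_X, d_H) containing at least two elements. Let A = ⋃_{B̄ ∈ 𝐀} B̄. Then diam 𝐀 (in the Hausdorff metric) equals diam A (in d). -/
open Metric Set

section Aux

variable {X : Type*} [MetricSpace X]

/-- In an ultrametric space, a point farther than `r` from `c` is at distance at least
`dist e c` from every point of `closedBall c r`. -/
lemma ultra_far (hu : ∀ x y z : X, dist x y ≤ max (dist x z) (dist z y))
    {e c : X} {r : ℝ} (h : r < dist e c) :
    ∀ b ∈ Metric.closedBall c r, dist e c ≤ dist e b := by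
  intro b hb
  rcases le_max_iff.mp (hu e c b) with h1 | h1
  · exact h1
  · exact absurd (le_trans h1 (Metric.mem_closedBall.mp hb)) (not_le.mpr h)

/-- Every point of an ultrametric ball is a center of it. -/
lemma ultra_ball_center (hu : ∀ x y z : X, dist x y ≤ max (dist x z) (dist z y))
    {x c : X} {r : ℝ} (hx : x ∈ Metric.closedBall c r) :
    Metric.closedBall x r = Metric.closedBall c r := by
  have hx' : dist x c ≤ r := hx
  ext y
  simp only [mem_closedBall]
  constructor
  · intro hy
    exact le_trans (hu y c x) (max_le hy hx')
  · intro hy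
    have : dist c x ≤ r := by rwa [dist_comm]
    exact le_trans (hu y x c) (max_le hy this)

/-- The diameter of an ultrametric closed ball is at most its radius. -/
lemma ultra_diam_ball (hu : ∀ x y z : X, dist x y ≤ max (dist x z) (dist z y))
    {c : X} {r : ℝ} (hr : 0 ≤ r) : Metric.diam (Metric.closedBall c r) ≤ r := by
  refine Metric.diam_le_of_forall_dist_le hr fun a ha b hb => ?_
  have hb' : dist c b ≤ r := by rw [dist_comm]; exact hb
  exact le_trans (hu a b c) (max_le ha hb')

/-- Auxiliary: a lower bound on all distances from a point of `s` to `t` gives a lower bound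
on the Hausdorff distance. -/
lemma le_hausdorffDist_aux {s t : Set X} {e : X} {u : ℝ} (he : e ∈ s) (ht : t.Nonempty)
    (fin : EMetric.hausdorffEdist s t ≠ ⊤) (h : ∀ b ∈ t, u ≤ dist e b) :
    u ≤ Metric.hausdorffDist s t := by
  have h1 : u ≤ Metric.infDist e t := by
    by_contra hc
    push_neg at hc
    obtain ⟨y, hy, hlt⟩ := (Metric.infDist_lt_iff ht).mp hc
    exact absurd (h y hy) (not_le.mpr hlt)
  exact le_trans h1 (Metric.infDist_le_hausdorffDist_of_mem he fin)

/-- Key lemma: the diameter of an ultrametric ball is at most the Hausdorff distance to any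
other (distinct) ultrametric ball. -/
lemma ultra_diam_le_hausdorffDist (hu : ∀ x y z : X, dist x y ≤ max (dist x z) (dist z y))
    {c c' : X} {r r' : ℝ} (hr : 0 ≤ r) (hr' : 0 ≤ r')
    (hne : Metric.closedBall c r ≠ Metric.closedBall c' r')
    (fin : EMetric.hausdorffEdist (Metric.closedBall c r) (Metric.closedBall c' r') ≠ ⊤) :
    Metric.diam (Metric.closedBall c r)
      ≤ Metric.hausdorffDist (Metric.closedBall c r) (Metric.closedBall c' r') := by
  have hBne : (Metric.closedBall c r).Nonempty := ⟨c, Metric.mem_closedBall_self hr⟩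
  have hB'ne : (Metric.closedBall c' r').Nonempty := ⟨c', Metric.mem_closedBall_self hr'⟩
  have fin' : EMetric.hausdorffEdist (Metric.closedBall c' r') (Metric.closedBall c r) ≠ ⊤ := by
    unfold EMetric.hausdorffEdist at fin ⊢
    rwa [Metric.hausdorffEDist_comm]
  rcases le_or_gt (dist c c') (max r r') with hle | hgt
  · rcases le_total r r' with h1 | h1
    · -- B ⊆ B'
      have hcc : dist c c' ≤ r' := le_trans hle (max_le (le_refl _ |>.trans h1) le_rfl)
      have hcB' : c ∈ Metric.closedBall c' r' := hcc
      have hBsub : Metric.closedBall c r ⊆ Metric.closedBall c' r' := by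
        rw [← ultra_ball_center hu hcB']
        exact Metric.closedBall_subset_closedBall h1
      obtain ⟨e, he', heB⟩ : ∃ e ∈ Metric.closedBall c' r', e ∉ Metric.closedBall c r := by
        by_contra h
        push_neg at h
        exact hne (subset_antisymm hBsub h)
      have he : r < dist e c := by simpa [Metric.mem_closedBall] using heB
      have h2 : dist e c ≤ Metric.hausdorffDist (Metric.closedBall c' r')
          (Metric.closedBall c r) :=
        le_hausdorffDist_aux he' hBne fin' (ultra_far hu he)
      rw [Metric.hausdorffDist_comm] at h2
      exact le_trans (ultra_diam_ball hu hr) (le_trans he.le h2)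
    · -- B' ⊆ B
      have hcc : dist c' c ≤ r := by
        rw [dist_comm]; exact le_trans hle (max_le le_rfl h1)
      have hc'B : c' ∈ Metric.closedBall c r := hcc
      have hB'sub : Metric.closedBall c' r' ⊆ Metric.closedBall c r := by
        rw [← ultra_ball_center hu hc'B]
        exact Metric.closedBall_subset_closedBall h1
      obtain ⟨e, heB, he'⟩ : ∃ e ∈ Metric.closedBall c r, e ∉ Metric.closedBall c' r' := by
        by_contra h
        push_neg at h
        exact hne (subset_antisymm h hB'sub)
      have he : r' < dist e c' := by simpa [Metric.mem_closedBall] using he'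
      have hEd : dist e c' ≤ Metric.hausdorffDist (Metric.closedBall c r)
          (Metric.closedBall c' r') :=
        le_hausdorffDist_aux heB hB'ne fin (ultra_far hu he)
      refine Metric.diam_le_of_forall_dist_le Metric.hausdorffDist_nonneg fun a ha b hb => ?_
      -- wlog dist b c' ≤ dist a c'
      have main : ∀ a b : X, a ∈ Metric.closedBall c r → b ∈ Metric.closedBall c r →
          dist b c' ≤ dist a c' →
          dist a b ≤ Metric.hausdorffDist (Metric.closedBall c r)
            (Metric.closedBall c' r') := by
        intro a b ha hb hba
        have hab : dist a b ≤ dist a c' := by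
          refine le_trans (hu a b c') (max_le le_rfl ?_)
          rwa [dist_comm]
        rcases le_or_gt (dist a c') r' with hcase | hcase
        · exact le_trans hab (le_trans hcase (le_trans he.le hEd))
        · exact le_trans hab (le_hausdorffDist_aux ha hB'ne fin (ultra_far hu hcase))
      rcases le_total (dist b c') (dist a c') with hc1 | hc1
      · exact main a b ha hb hc1
      · rw [dist_comm]; exact main b a hb ha hc1
  · -- disjoint balls
    have hfar : r < dist c' c := by
      rw [dist_comm]
      exact lt_of_le_of_lt (le_max_left r r') hgt
    have h2 : dist c' c ≤ Metric.hausdorffDist (Metric.closedBall c' r')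
        (Metric.closedBall c r) :=
      le_hausdorffDist_aux (Metric.mem_closedBall_self hr') hBne fin' (ultra_far hu hfar)
    rw [Metric.hausdorffDist_comm] at h2
    exact le_trans (ultra_diam_ball hu hr) (le_trans hfar.le h2)

end Aux

/-- For a bounded family `Bs` of closed balls of an ultrametric space containing at least two
elements, the diameter of `Bs` in the Hausdorff metric equals the diameter of the union of
the balls of `Bs` in `X`. -/
theorem stmt10 {X : Type*} [MetricSpace X]
    (hu : ∀ x y z : X, dist x y ≤ max (dist x z) (dist z y))
    {Bs : Set (Set X)} (hA : Bs ⊆ ClosedBalls X)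
    (hb : ∃ C : ℝ, ∀ B₁ ∈ Bs, ∀ B₂ ∈ Bs, EMetric.hausdorffEdist B₁ B₂ ≤ ENNReal.ofReal C)
    (h2 : ∃ B₁ ∈ Bs, ∃ B₂ ∈ Bs, B₁ ≠ B₂) :
    sSup {d : ℝ | ∃ B₁ ∈ Bs, ∃ B₂ ∈ Bs, d = Metric.hausdorffDist B₁ B₂}
      = Metric.diam (⋃₀ Bs) := by
  obtain ⟨C, hC⟩ := hb
  obtain ⟨B₁, hB₁, B₂, hB₂, hB₁₂⟩ := h2
  set S : Set ℝ := {d : ℝ | ∃ B₁ ∈ Bs, ∃ B₂ ∈ Bs, d = Metric.hausdorffDist B₁ B₂} with hS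
  -- finiteness of Hausdorff edistances within Bs
  have fin : ∀ B ∈ Bs, ∀ B' ∈ Bs, EMetric.hausdorffEdist B B' ≠ ⊤ := by
    intro B hB B' hB'
    exact ne_top_of_le_ne_top ENNReal.ofReal_ne_top (hC B hB B' hB')
  -- nonemptiness of each ball
  have hne : ∀ B ∈ Bs, B.Nonempty := by
    intro B hB
    obtain ⟨c, r, hr, rfl⟩ := hA hB
    exact ⟨c, Metric.mem_closedBall_self hr⟩
  -- S is bounded above
  have hbdd : BddAbove S := by
    refine ⟨(ENNReal.ofReal C).toReal, fun d hd => ?_⟩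
    obtain ⟨Ba, hBa, Bb, hBb, rfl⟩ := hd
    exact ENNReal.toReal_mono ENNReal.ofReal_ne_top (hC Ba hBa Bb hBb)
  -- the union is bounded
  obtain ⟨c₀, r₀, hr₀, hB₁eq⟩ := hA hB₁
  have hAbdd : Bornology.IsBounded (⋃₀ Bs) := by
    refine (Metric.isBounded_closedBall
      (x := c₀) (r := (ENNReal.ofReal C).toReal + r₀)).subset ?_
    intro x hx
    obtain ⟨B, hB, hxB⟩ := hx
    have h1 : Metric.infDist x B₁ ≤ Metric.hausdorffDist B B₁ :=
      Metric.infDist_le_hausdorffDist_of_mem hxB (fin B hB B₁ hB₁)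
    have h2 : Metric.hausdorffDist B B₁ ≤ (ENNReal.ofReal C).toReal :=
      ENNReal.toReal_mono ENNReal.ofReal_ne_top (hC B hB B₁ hB₁)
    have h3 : dist x c₀ - r₀ ≤ Metric.infDist x B₁ := by
      by_contra hcon
      push_neg at hcon
      obtain ⟨y, hy, hlt⟩ := (Metric.infDist_lt_iff (hne B₁ hB₁)).mp hcon
      have hy' : dist y c₀ ≤ r₀ := by rw [hB₁eq] at hy; exact hy
      have : dist x c₀ ≤ dist x y + dist y c₀ := dist_triangle x y c₀
      linarith
    have : dist x c₀ ≤ (ENNReal.ofReal C).toReal + r₀ := by linarith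
    exact this
  -- each Hausdorff distance is at most diam of the union
  have hle : sSup S ≤ Metric.diam (⋃₀ Bs) := by
    refine Real.sSup_le ?_ Metric.diam_nonneg
    rintro d ⟨Ba, hBa, Bb, hBb, rfl⟩
    obtain ⟨cb, rb, hrb, hBbeq⟩ := hA hBb
    obtain ⟨ca, ra, hra, hBaeq⟩ := hA hBa
    refine Metric.hausdorffDist_le_of_mem_dist Metric.diam_nonneg ?_ ?_
    · intro x hx
      refine ⟨cb, by rw [hBbeq]; exact Metric.mem_closedBall_self hrb, ?_⟩
      refine Metric.dist_le_diam_of_mem hAbdd ⟨Ba, hBa, hx⟩ ⟨Bb, hBb, ?_⟩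
      rw [hBbeq]; exact Metric.mem_closedBall_self hrb
    · intro x hx
      refine ⟨ca, by rw [hBaeq]; exact Metric.mem_closedBall_self hra, ?_⟩
      refine Metric.dist_le_diam_of_mem hAbdd ⟨Bb, hBb, hx⟩ ⟨Ba, hBa, ?_⟩
      rw [hBaeq]; exact Metric.mem_closedBall_self hra
  -- diam of each ball in Bs is at most sSup S
  have hdiam_ball : ∀ B ∈ Bs, Metric.diam B ≤ sSup S := by
    intro B hB
    obtain ⟨B', hB', hBB'⟩ : ∃ B' ∈ Bs, B ≠ B' := by
      by_cases h : B = B₁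
      · exact ⟨B₂, hB₂, by rw [h]; exact hB₁₂⟩
      · exact ⟨B₁, hB₁, h⟩
    obtain ⟨c, r, hr, rfl⟩ := hA hB
    obtain ⟨c', r', hr', rfl⟩ := hA hB'
    have key := ultra_diam_le_hausdorffDist hu hr hr' hBB' (fin _ hB _ hB')
    exact le_trans key (le_csSup hbdd ⟨_, hB, _, hB', rfl⟩)
  have hSnonneg : 0 ≤ sSup S :=
    le_trans Metric.hausdorffDist_nonneg (le_csSup hbdd ⟨_, hB₁, _, hB₂, rfl⟩)
  -- diam of the union is at most sSup S
  have hge : Metric.diam (⋃₀ Bs) ≤ sSup S := by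
    refine Metric.diam_le_of_forall_dist_le hSnonneg ?_
    rintro x ⟨Bx, hBx, hxBx⟩ y ⟨By, hBy, hyBy⟩
    obtain ⟨cx, rx, hrx, hBxeq⟩ := hA hBx
    obtain ⟨cy, ry, hry, hByeq⟩ := hA hBy
    rcases le_or_gt (dist x y) rx with hcase | hcase
    · -- y ∈ Bx, so dist x y ≤ diam Bx
      have hy : y ∈ Bx := by
        rw [hBxeq] at hxBx ⊢
        rw [← ultra_ball_center hu hxBx]
        exact Metric.mem_closedBall.mpr (by rw [dist_comm]; exact hcase)
      have : dist x y ≤ Metric.diam Bx := by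
        refine Metric.dist_le_diam_of_mem ?_ hxBx hy
        rw [hBxeq]; exact Metric.isBounded_closedBall
      exact le_trans this (hdiam_ball Bx hBx)
    · rcases le_or_gt (dist x y) ry with hcase' | hcase'
      · -- x ∈ By
        have hx : x ∈ By := by
          rw [hByeq] at hyBy ⊢
          rw [← ultra_ball_center hu hyBy]
          exact Metric.mem_closedBall.mpr hcase'
        have : dist x y ≤ Metric.diam By := by
          refine Metric.dist_le_diam_of_mem ?_ hx hyBy
          rw [hByeq]; exact Metric.isBounded_closedBall
        exact le_trans this (hdiam_ball By hBy)
      · -- dist x y > max radii: dist x y ≤ hausdorffDist Bx By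
        have hyB : dist cy y ≤ ry := by
          rw [dist_comm]; rw [hByeq] at hyBy; exact hyBy
        have hxy_le : dist x y ≤ dist x cy := by
          rcases le_max_iff.mp (hu x y cy) with h1 | h1
          · exact h1
          · exact absurd (le_trans h1 hyB) (not_le.mpr hcase')
        have hxcy : ry < dist x cy := lt_of_lt_of_le hcase' hxy_le
        have hlow : ∀ b ∈ By, dist x y ≤ dist x b := by
          intro b hbB
          have hfar : dist x cy ≤ dist x b := by
            rw [hByeq] at hbB
            exact ultra_far hu hxcy b hbB
          exact le_trans hxy_le hfar
        have : dist x y ≤ Metric.hausdorffDist Bx By :=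
          le_hausdorffDist_aux hxBx (hne By hBy) (fin Bx hBx By hBy) hlow
        exact le_trans this (le_csSup hbdd ⟨Bx, hBx, By, hBy, rfl⟩)
  exact le_antisymm hle hge
end

section
/- Let (X,d) be an ultrametric space. The set of isolated points of the space (B̄_X, d_H) of closed balls with the Hausdorff metric equals the union of {B̄ ∈ B̄_X : diam B̄ > 0} and {{x} : x is an isolated point of X}, and this union equals B̄_X⁰, the set of closed balls of strictly positive radius. -/
open Metric Set

section Ultra
variable {X : Type*} [MetricSpace X]
variable (hu : ∀ x y z : X, dist x y ≤ max (dist x z) (dist z y))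

lemma le_infDist' {s : Set X} (hs : s.Nonempty) {x : X} {b : ℝ}
    (h : ∀ y ∈ s, b ≤ dist x y) : b ≤ Metric.infDist x s := by
  by_contra hlt
  push_neg at hlt
  obtain ⟨y, hy, hd⟩ := (Metric.infDist_lt_iff hs).1 hlt
  exact absurd hd (not_lt.2 (h y hy))

include hu

/-- In an ultrametric, every point of a ball is a center. -/
lemma ultra_center {c y : X} {r : ℝ} (hy : y ∈ closedBall c r) :
    closedBall y r = closedBall c r := by
  have hyc : dist y c ≤ r := mem_closedBall.1 hy
  ext z
  simp only [mem_closedBall]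
  constructor
  · intro hz
    calc dist z c ≤ max (dist z y) (dist y c) := hu z c y
    _ ≤ r := max_le hz hyc
  · intro hz
    calc dist z y ≤ max (dist z c) (dist c y) := hu z y c
    _ ≤ r := max_le hz (by rwa [dist_comm])

lemma ultra_dist_le {c x y : X} {r : ℝ} (hx : x ∈ closedBall c r) (hy : y ∈ closedBall c r) :
    dist x y ≤ r := by
  calc dist x y ≤ max (dist x c) (dist c y) := hu x y c
  _ ≤ r := max_le (mem_closedBall.1 hx) (by rw [dist_comm]; exact mem_closedBall.1 hy)

lemma ultra_diam_le {c : X} {r : ℝ} (hr : 0 ≤ r) : Metric.diam (closedBall c r) ≤ r :=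
  Metric.diam_le_of_forall_dist_le hr fun _ hx _ hy => ultra_dist_le hu hx hy

omit hu in
lemma diam_zero_eq_singleton {c : X} {r : ℝ} (hr : 0 ≤ r)
    (h : Metric.diam (closedBall c r) = 0) : closedBall c r = {c} := by
  apply Set.eq_singleton_iff_unique_mem.2
  refine ⟨mem_closedBall_self hr, fun x hx => ?_⟩
  have := Metric.dist_le_diam_of_mem isBounded_closedBall hx (mem_closedBall_self hr)
  rw [h] at this
  exact dist_le_zero.1 this

/-- Key: a ball of positive radius and positive diameter is isolated, with radius `diam/2`. -/
lemma isolated_of_diam_pos {c : X} {r : ℝ} (hr : 0 < r)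
    (hd : 0 < Metric.diam (closedBall c r)) :
    ∀ B' ∈ ClosedBalls X,
      Metric.hausdorffDist (closedBall c r) B' ≤ Metric.diam (closedBall c r) / 2 →
      B' = closedBall c r := by
  rintro B' ⟨c', r', hr', rfl⟩ hH
  set B := closedBall c r with hB
  set ρ := Metric.diam B / 2 with hρ
  have hρd : ρ < Metric.diam B := by rw [hρ]; linarith
  have hBne : B.Nonempty := nonempty_closedBall.2 hr.le
  have hB'ne : (closedBall c' r').Nonempty := nonempty_closedBall.2 hr'
  have hfin : EMetric.hausdorffEdist B (closedBall c' r') ≠ ⊤ :=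
    Metric.hausdorffEdist_ne_top_of_nonempty_of_bounded hBne hB'ne
      isBounded_closedBall isBounded_closedBall
  have hdr : Metric.diam B ≤ r := ultra_diam_le hu hr.le
  -- Step 1 : B ⊆ B'
  have sub1 : B ⊆ closedBall c' r' := by
    by_contra hsub
    rw [Set.not_subset] at hsub
    -- every point of B not in B' is within ρ of c'
    have key : ∀ u ∈ B, u ∉ closedBall c' r' → dist u c' ≤ ρ := by
      intro u huB hu'
      have hle : dist u c' ≤ Metric.infDist u (closedBall c' r') := by
        apply le_infDist' hB'ne
        intro y hy
        have hy' : r' < dist u y := by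
          have : u ∉ closedBall y r' := by rwa [ultra_center hu hy]
          simpa [mem_closedBall, not_le] using this
        calc dist u c' ≤ max (dist u y) (dist y c') := hu u c' y
        _ = dist u y := max_eq_left ((mem_closedBall.1 hy).trans hy'.le)
      calc dist u c' ≤ Metric.infDist u (closedBall c' r') := hle
      _ ≤ Metric.hausdorffDist B (closedBall c' r') :=
          Metric.infDist_le_hausdorffDist_of_mem huB hfin
      _ ≤ ρ := hH
    obtain ⟨x, hxB, hx'⟩ := hsub
    have hr'ρ : r' ≤ ρ := by
      have h1 : r' < dist x c' := by simpa [mem_closedBall, not_le] using hx'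
      exact h1.le.trans (key x hxB hx')
    have hall : ∀ u ∈ B, dist u c' ≤ ρ := by
      intro u huB
      by_cases h : u ∈ closedBall c' r'
      · exact (mem_closedBall.1 h).trans hr'ρ
      · exact key u huB h
    have : Metric.diam B ≤ ρ := by
      apply Metric.diam_le_of_forall_dist_le (le_trans (by positivity) (hall c (mem_closedBall_self hr.le)))
      intro u huB v hvB
      calc dist u v ≤ max (dist u c') (dist c' v) := hu u v c'
      _ ≤ ρ := max_le (hall u huB) (by rw [dist_comm]; exact hall v hvB)
    exact absurd this (not_le.2 hρd)
  -- Step 2 : B' ⊆ B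
  have sub2 : closedBall c' r' ⊆ B := by
    by_contra hsub
    rw [Set.not_subset] at hsub
    obtain ⟨y, hyB', hyB⟩ := hsub
    have h1 : r ≤ Metric.infDist y B := by
      apply le_infDist' hBne
      intro z hz
      have h2 : y ∉ closedBall z r := by rwa [ultra_center hu hz]
      have h3 := not_le.1 (mem_closedBall.not.1 h2)
      linarith
    have h2 : Metric.infDist y B ≤ ρ := by
      calc Metric.infDist y B
          ≤ Metric.hausdorffDist (closedBall c' r') B :=
            Metric.infDist_le_hausdorffDist_of_mem hyB' (by rwa [EMetric.hausdorffEdist_comm])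
        _ = Metric.hausdorffDist B (closedBall c' r') := Metric.hausdorffDist_comm
        _ ≤ ρ := hH
    have : r < r := lt_of_le_of_lt (h1.trans h2) (hρd.trans_le hdr)
    exact absurd this (lt_irrefl r)
  exact Set.Subset.antisymm sub2 sub1

omit hu in
/-- A singleton which is a positive-radius ball is isolated. -/
lemma isolated_singleton {x : X} {ρ : ℝ} (hρ : 0 < ρ) (h : closedBall x ρ = {x}) :
    ∀ B' ∈ ClosedBalls X,
      Metric.hausdorffDist ({x} : Set X) B' ≤ ρ → B' = ({x} : Set X) := by
  rintro B' ⟨c', r', hr', rfl⟩ hH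
  have hB'ne : (closedBall c' r').Nonempty := nonempty_closedBall.2 hr'
  have hfin : EMetric.hausdorffEdist ({x} : Set X) (closedBall c' r') ≠ ⊤ :=
    Metric.hausdorffEdist_ne_top_of_nonempty_of_bounded (Set.singleton_nonempty x) hB'ne
      Bornology.isBounded_singleton isBounded_closedBall
  rw [← hB'ne.subset_singleton_iff]
  intro y hy
  have h1 : Metric.infDist y ({x} : Set X) ≤ ρ := by
    calc Metric.infDist y ({x} : Set X)
        ≤ Metric.hausdorffDist (closedBall c' r') ({x} : Set X) :=
          Metric.infDist_le_hausdorffDist_of_mem hy (by rwa [EMetric.hausdorffEdist_comm])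
      _ = Metric.hausdorffDist ({x} : Set X) (closedBall c' r') := Metric.hausdorffDist_comm
      _ ≤ ρ := hH
  rw [Metric.infDist_singleton] at h1
  have h2 : y ∈ closedBall x ρ := mem_closedBall.2 h1
  rwa [h] at h2

end Ultra

/-- For an ultrametric space `X`, the isolated points of the space of closed balls with the
Hausdorff metric are exactly the balls of positive diameter together with the singletons of
isolated points of `X`, and these are exactly the balls of strictly positive radius. -/
theorem stmt13 {X : Type*} [MetricSpace X]
    (hu : ∀ x y z : X, dist x y ≤ max (dist x z) (dist z y)) :
    {B ∈ ClosedBalls X |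
        ∃ r > (0 : ℝ), ∀ B' ∈ ClosedBalls X, Metric.hausdorffDist B B' ≤ r → B' = B}
      = {B ∈ ClosedBalls X | 0 < Metric.diam B} ∪
          {B : Set X | ∃ x : X, (∃ r > (0 : ℝ), Metric.closedBall x r = {x}) ∧ B = {x}} ∧
    {B ∈ ClosedBalls X | 0 < Metric.diam B} ∪
        {B : Set X | ∃ x : X, (∃ r > (0 : ℝ), Metric.closedBall x r = {x}) ∧ B = {x}}
      = PosBalls X := by
  have eq2 : {B ∈ ClosedBalls X | 0 < Metric.diam B} ∪
        {B : Set X | ∃ x : X, (∃ r > (0 : ℝ), Metric.closedBall x r = {x}) ∧ B = {x}}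
      = PosBalls X := by
    ext B
    constructor
    · rintro (⟨⟨c, r, hr, rfl⟩, hd⟩ | ⟨x, ⟨ρ, hρ, hball⟩, rfl⟩)
      · exact ⟨c, r, lt_of_lt_of_le hd (ultra_diam_le hu hr), rfl⟩
      · exact ⟨x, ρ, hρ, hball.symm⟩
    · rintro ⟨c, r, hr, rfl⟩
      by_cases hd : 0 < Metric.diam (closedBall c r)
      · exact Or.inl ⟨⟨c, r, hr.le, rfl⟩, hd⟩
      · have hd0 : Metric.diam (closedBall c r) = 0 :=
          le_antisymm (not_lt.1 hd) Metric.diam_nonneg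
        have hs := diam_zero_eq_singleton hr.le hd0
        exact Or.inr ⟨c, ⟨r, hr, hs⟩, hs⟩
  have eq1 : {B ∈ ClosedBalls X |
        ∃ r > (0 : ℝ), ∀ B' ∈ ClosedBalls X, Metric.hausdorffDist B B' ≤ r → B' = B}
      = PosBalls X := by
    ext B
    constructor
    · rintro ⟨⟨c, r, hr, rfl⟩, ρ, hρ, hiso⟩
      by_cases hd : 0 < Metric.diam (closedBall c r)
      · exact ⟨c, r, lt_of_lt_of_le hd (ultra_diam_le hu hr), rfl⟩
      · have hd0 : Metric.diam (closedBall c r) = 0 :=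
          le_antisymm (not_lt.1 hd) Metric.diam_nonneg
        have hs := diam_zero_eq_singleton hr hd0
        have hball : closedBall c ρ = {c} := by
          by_contra hne
          have hcc : ({c} : Set X) ⊆ closedBall c ρ := by
            simp [Set.singleton_subset_iff, mem_closedBall_self hρ.le]
          obtain ⟨y, hy, hyc⟩ : ∃ y ∈ closedBall c ρ, y ∉ ({c} : Set X) := by
            by_contra h
            push_neg at h
            exact hne (Set.Subset.antisymm h hcc)
          have hyρ : dist y c ≤ ρ := mem_closedBall.1 hy
          have hs0 : (0 : ℝ) ≤ dist y c := dist_nonneg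
          have hdH : Metric.hausdorffDist (closedBall c r) (closedBall c (dist y c)) ≤ ρ := by
            rw [hs]
            apply Metric.hausdorffDist_le_of_mem_dist hρ.le
            · intro a ha
              refine ⟨c, mem_closedBall_self hs0, ?_⟩
              rw [Set.mem_singleton_iff.1 ha]
              simpa using hρ.le
            · intro b hb
              exact ⟨c, rfl, by simpa [dist_comm] using (mem_closedBall.1 hb).trans hyρ⟩
          have heq := hiso (closedBall c (dist y c)) ⟨c, dist y c, hs0, rfl⟩ hdH
          rw [hs] at heq
          exact hyc (heq ▸ mem_closedBall.2 le_rfl)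
        exact ⟨c, ρ, hρ, by rw [hball, ← hs]⟩
    · rintro ⟨c, r, hr, rfl⟩
      refine ⟨⟨c, r, hr.le, rfl⟩, ?_⟩
      by_cases hd : 0 < Metric.diam (closedBall c r)
      · exact ⟨Metric.diam (closedBall c r) / 2, by positivity, isolated_of_diam_pos hu hr hd⟩
      · have hd0 : Metric.diam (closedBall c r) = 0 :=
          le_antisymm (not_lt.1 hd) Metric.diam_nonneg
        have hs := diam_zero_eq_singleton hr.le hd0
        refine ⟨r, hr, fun B' hB' hH => ?_⟩
        rw [hs] at hH ⊢
        exact isolated_singleton hr hs B' hB' hH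
  exact ⟨eq1.trans eq2.symm, eq2⟩
end

section
/- Let (X,d) be an ultrametric space. Then the accumulation points of the space (B̄_X, d_H) are exactly the singletons {x} with x an accumulation point of X: acc(B̄_X) = {{x} : x ∈ acc(X)}. -/
open Metric

/-- In an ultrametric space, a point outside a closed ball has distance at least
`dist y c` to the ball. -/
lemma ultra_le_infDist {X : Type*} [MetricSpace X]
    (hu : ∀ x y z : X, dist x y ≤ max (dist x z) (dist z y))
    {c : X} {r : ℝ} (hr : 0 ≤ r) {y : X} (hy : r < dist y c) :
    dist y c ≤ Metric.infDist y (Metric.closedBall c r) := by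
  by_contra h
  push_neg at h
  obtain ⟨z, hz, hlt⟩ := (Metric.infDist_lt_iff ⟨c, Metric.mem_closedBall_self hr⟩).1 h
  have h1 : dist y c ≤ max (dist y z) (dist z c) := hu y c z
  have h2 : dist z c ≤ r := Metric.mem_closedBall.1 hz
  rcases max_cases (dist y z) (dist z c) with ⟨he, _⟩ | ⟨he, _⟩ <;> rw [he] at h1 <;> linarith

/-- For an ultrametric space `X`, the accumulation points of the space of closed balls with
the Hausdorff metric are exactly the singletons of accumulation points of `X`. -/
theorem stmt14 {X : Type*} [MetricSpace X]
    (hu : ∀ x y z : X, dist x y ≤ max (dist x z) (dist z y)) :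
    {B ∈ ClosedBalls X |
        ∀ r > (0 : ℝ), ∃ B' ∈ ClosedBalls X, B' ≠ B ∧ Metric.hausdorffDist B B' ≤ r}
      = {B : Set X | ∃ x : X, (∀ r > (0 : ℝ), ∃ y : X, y ≠ x ∧ dist x y ≤ r) ∧ B = {x}} := by
  ext B
  constructor
  · rintro ⟨⟨c, R, hR, rfl⟩, hacc⟩
    -- finiteness helper
    have hfin : ∀ (c' : X) (r' : ℝ), 0 ≤ r' →
        EMetric.hausdorffEdist (Metric.closedBall c R) (Metric.closedBall c' r') ≠ ⊤ :=
      fun c' r' hr' => Metric.hausdorffEdist_ne_top_of_nonempty_of_bounded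
        ⟨c, Metric.mem_closedBall_self hR⟩ ⟨c', Metric.mem_closedBall_self hr'⟩
        Metric.isBounded_closedBall Metric.isBounded_closedBall
    -- step 1: the ball is a subsingleton
    have hsub : ∀ a ∈ Metric.closedBall c R, ∀ b ∈ Metric.closedBall c R, a = b := by
      intro a ha b hb
      by_contra hab
      set d0 := dist a b with hd0
      have hd0pos : 0 < d0 := dist_pos.2 hab
      obtain ⟨B', ⟨c', r', hr', rfl⟩, hne, hH⟩ := hacc (d0 / 2) (by linarith)
      have hfin' := hfin c' r' hr'
      -- every point of B is within max (d0/2) r' of c'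
      have key : ∀ x ∈ Metric.closedBall c R, dist x c' ≤ max (d0 / 2) r' := by
        intro x hx
        rcases le_or_gt (dist x c') r' with h | h
        · exact le_max_of_le_right h
        · refine le_max_of_le_left ?_
          calc dist x c' ≤ Metric.infDist x (Metric.closedBall c' r') :=
                ultra_le_infDist hu hr' h
            _ ≤ Metric.hausdorffDist (Metric.closedBall c R) (Metric.closedBall c' r') :=
                Metric.infDist_le_hausdorffDist_of_mem hx hfin'
            _ ≤ d0 / 2 := hH
      have hmax : d0 ≤ max (d0 / 2) r' := by
        have h1 := key a ha
        have h2 := key b hb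
        calc d0 ≤ max (dist a c') (dist c' b) := hu a b c'
          _ ≤ max (d0 / 2) r' := by
              rw [dist_comm c' b]; exact max_le h1 h2
      have hr'big : d0 ≤ r' := by
        rcases max_cases (d0 / 2) r' with ⟨he, _⟩ | ⟨he, _⟩ <;> rw [he] at hmax <;> linarith
      have hRbig : d0 ≤ R := by
        calc d0 ≤ max (dist a c) (dist c b) := hu a b c
          _ ≤ R := max_le (Metric.mem_closedBall.1 ha)
              (by rw [dist_comm]; exact Metric.mem_closedBall.1 hb)
      -- the two balls are distinct, get a point in the symmetric difference
      have hcase : ¬ (Metric.closedBall c' r' ⊆ Metric.closedBall c R) ∨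
          ¬ (Metric.closedBall c R ⊆ Metric.closedBall c' r') := by
        by_contra h
        push_neg at h
        exact hne (Set.Subset.antisymm h.1 h.2)
      rcases hcase with h | h
      · obtain ⟨y, hy1, hy2⟩ := Set.not_subset.1 h
        have hlt : R < dist y c := lt_of_not_ge fun hle => hy2 (Metric.mem_closedBall.2 hle)
        have : dist y c ≤ d0 / 2 := by
          calc dist y c ≤ Metric.infDist y (Metric.closedBall c R) :=
                ultra_le_infDist hu hR hlt
            _ ≤ Metric.hausdorffDist (Metric.closedBall c' r') (Metric.closedBall c R) :=
                Metric.infDist_le_hausdorffDist_of_mem hy1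
                  (by rw [EMetric.hausdorffEdist_comm]; exact hfin')
            _ = Metric.hausdorffDist (Metric.closedBall c R) (Metric.closedBall c' r') :=
                Metric.hausdorffDist_comm
            _ ≤ d0 / 2 := hH
        linarith [lt_of_le_of_lt hRbig hlt]
      · obtain ⟨x, hx1, hxB⟩ := Set.not_subset.1 h
        have hlt : r' < dist x c' := lt_of_not_ge fun hle => hxB (Metric.mem_closedBall.2 hle)
        have : dist x c' ≤ d0 / 2 :=
          le_trans (ultra_le_infDist hu hr' hlt)
            (le_trans (Metric.infDist_le_hausdorffDist_of_mem hx1 hfin') hH)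
        linarith [lt_of_le_of_lt hr'big hlt]
    have hBeq : Metric.closedBall c R = {c} := by
      apply Set.eq_singleton_iff_unique_mem.2
      exact ⟨Metric.mem_closedBall_self hR, fun x hx => hsub x hx c (Metric.mem_closedBall_self hR)⟩
    refine ⟨c, ?_, hBeq⟩
    intro r hr
    obtain ⟨B', ⟨c', r', hr', rfl⟩, hne, hH⟩ := hacc r hr
    -- B' ≠ closedBall c R = {c}, so B' has a point ≠ c
    rw [hBeq] at hne hH
    have : ∃ y ∈ Metric.closedBall c' r', y ≠ c := by
      by_contra h
      push_neg at h
      apply hne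
      apply Set.Subset.antisymm (fun y hy => h y hy)
      intro z hz
      rcases hz with rfl
      have hc' : c' = z := h c' (Metric.mem_closedBall_self hr')
      rw [← hc']
      exact Metric.mem_closedBall_self hr'
    obtain ⟨y, hyB, hyc⟩ := this
    refine ⟨y, hyc, ?_⟩
    have hfin' : EMetric.hausdorffEdist ({c} : Set X) (Metric.closedBall c' r') ≠ ⊤ :=
      Metric.hausdorffEdist_ne_top_of_nonempty_of_bounded
        ⟨c, rfl⟩ ⟨c', Metric.mem_closedBall_self hr'⟩
        Bornology.isBounded_singleton Metric.isBounded_closedBall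
    calc dist c y = Metric.infDist y ({c} : Set X) := by
          rw [Metric.infDist_singleton, dist_comm]
      _ ≤ Metric.hausdorffDist (Metric.closedBall c' r') ({c} : Set X) :=
          Metric.infDist_le_hausdorffDist_of_mem hyB
            (by rw [EMetric.hausdorffEdist_comm]; exact hfin')
      _ = Metric.hausdorffDist ({c} : Set X) (Metric.closedBall c' r') :=
          Metric.hausdorffDist_comm
      _ ≤ r := hH
  · rintro ⟨x, hx, rfl⟩
    refine ⟨⟨x, 0, le_refl 0, by simp⟩, ?_⟩
    intro r hr
    obtain ⟨y, hyx, hd⟩ := hx r hr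
    refine ⟨{y}, ⟨y, 0, le_refl 0, by simp⟩, ?_, ?_⟩
    · intro h
      exact hyx (by simpa using h)
    · apply Metric.hausdorffDist_le_of_mem_dist (le_of_lt hr)
      · rintro a rfl
        exact ⟨y, rfl, by rwa [dist_comm] at hd ⊢⟩
      · rintro b rfl
        exact ⟨x, rfl, by rwa [dist_comm]⟩
end

section
/- Let (X,d) be an ultrametric space. Then the set B̄_X⁰ of closed balls of strictly positive radius is the unique dense discrete subset of the space (B̄_X, d_H) of all closed balls with the Hausdorff metric. -/
open Metric EMetric Set

section Helpers

variable {X : Type*} [MetricSpace X]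

lemma my_le_infDist {s : Set X} {x : X} {δ : ℝ} (hs : s.Nonempty)
    (h : ∀ y ∈ s, δ ≤ dist x y) : δ ≤ Metric.infDist x s := by
  by_contra hlt
  obtain ⟨y, hy, hd⟩ := (Metric.infDist_lt_iff hs).1 (not_le.1 hlt)
  exact (h y hy).not_gt hd

lemma my_finEdist (c c' : X) {r r' : ℝ} (hr : 0 ≤ r) (hr' : 0 ≤ r') :
    EMetric.hausdorffEdist (Metric.closedBall c r) (Metric.closedBall c' r') ≠ ⊤ :=
  Metric.hausdorffEdist_ne_top_of_nonempty_of_bounded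
    ⟨c, Metric.mem_closedBall_self hr⟩ ⟨c', Metric.mem_closedBall_self hr'⟩
    Metric.isBounded_closedBall Metric.isBounded_closedBall

variable [IsUltrametricDist X]

lemma my_dist_le_of_not_mem {c z y : X} {r : ℝ} (hz : z ∉ Metric.closedBall c r)
    (hy : y ∈ Metric.closedBall c r) : dist z c ≤ dist z y := by
  simp only [Metric.mem_closedBall, not_le] at hz hy
  have h1 : dist z c ≤ max (dist z y) (dist y c) := IsUltrametricDist.dist_triangle_max z y c
  by_contra hcon
  have : max (dist z y) (dist y c) < dist z c :=
    max_lt (not_le.1 hcon) (hy.trans_lt hz)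
  exact absurd h1 this.not_ge

lemma my_infDist_out {c z : X} {r : ℝ} (hr : 0 ≤ r) (hz : z ∉ Metric.closedBall c r) :
    dist z c ≤ Metric.infDist z (Metric.closedBall c r) :=
  my_le_infDist ⟨c, Metric.mem_closedBall_self hr⟩ fun y hy => my_dist_le_of_not_mem hz hy

/-- A closed ball of positive radius is isolated (with some positive isolation radius)
among all closed balls, w.r.t. the Hausdorff distance. -/
lemma my_ball_isolated (c : X) {r : ℝ} (hr : 0 < r) :
    ∃ ρ > (0 : ℝ), ∀ (c' : X) (r' : ℝ), 0 ≤ r' →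
      Metric.hausdorffDist (Metric.closedBall c r) (Metric.closedBall c' r') ≤ ρ →
      Metric.closedBall c' r' = Metric.closedBall c r := by
  set B := Metric.closedBall c r with hB
  have hcB : c ∈ B := Metric.mem_closedBall_self hr.le
  by_cases hsing : ∀ z ∈ B, z = c
  · -- B is the singleton {c}; take ρ = r
    refine ⟨r, hr, fun c' r' hr' h => ?_⟩
    have fin := my_finEdist c c' hr.le hr'
    have fin' := my_finEdist c' c hr' hr.le
    have sub1 : Metric.closedBall c' r' ⊆ B := by
      intro w hw
      by_contra hwB
      have h1 : dist w c ≤ Metric.infDist w B := my_infDist_out hr.le hwB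
      have h2 : Metric.infDist w B ≤
          Metric.hausdorffDist (Metric.closedBall c' r') B :=
        Metric.infDist_le_hausdorffDist_of_mem hw fin'
      rw [Metric.hausdorffDist_comm] at h2
      have : r < dist w c := by simpa [hB] using hwB
      linarith [h1.trans (h2.trans h)]
    refine subset_antisymm sub1 fun z hz => ?_
    have hzc : z = c := hsing z hz
    have hc' : c' = c := hsing c' (sub1 (Metric.mem_closedBall_self hr'))
    simp [hzc, hc', Metric.mem_closedBall, hr']
  · -- B has a point z₀ ≠ c; take ρ = dist z₀ c / 2
    push_neg at hsing
    obtain ⟨z₀, hz₀B, hz₀⟩ := hsing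
    set d := dist z₀ c with hd
    have hd0 : 0 < d := dist_pos.2 hz₀
    have hdr : d ≤ r := by simpa [hB, Metric.mem_closedBall] using hz₀B
    refine ⟨d / 2, by linarith, fun c' r' hr' h => ?_⟩
    set B' := Metric.closedBall c' r' with hB'
    have fin := my_finEdist c c' hr.le hr'
    have fin' := my_finEdist c' c hr' hr.le
    have sub1 : B' ⊆ B := by
      intro w hw
      by_contra hwB
      have h1 : dist w c ≤ Metric.infDist w B := my_infDist_out hr.le hwB
      have h2 : Metric.infDist w B ≤ Metric.hausdorffDist B' B :=
        Metric.infDist_le_hausdorffDist_of_mem hw fin'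
      rw [Metric.hausdorffDist_comm] at h2
      have hw' : r < dist w c := by simpa [hB] using hwB
      linarith [h1.trans (h2.trans h)]
    refine subset_antisymm sub1 fun z hz => ?_
    by_contra hzB'
    -- r' < d/2
    have h1 : dist z c' ≤ Metric.infDist z B' := my_infDist_out hr' hzB'
    have h2 : Metric.infDist z B' ≤ Metric.hausdorffDist B B' :=
      Metric.infDist_le_hausdorffDist_of_mem hz fin
    have hzc' : r' < dist z c' := by simpa [hB'] using hzB'
    have hr'ρ : r' < d / 2 := lt_of_lt_of_le hzc' (h1.trans (h2.trans h))
    -- every point of B is within d/2 of c'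
    have hall : ∀ w ∈ B, dist w c' ≤ d / 2 := by
      intro w hwB
      by_cases hw : w ∈ B'
      · exact le_of_lt (lt_of_le_of_lt (by simpa [hB'] using hw) hr'ρ)
      · have h1 : dist w c' ≤ Metric.infDist w B' := my_infDist_out hr' hw
        have h2 : Metric.infDist w B' ≤ Metric.hausdorffDist B B' :=
          Metric.infDist_le_hausdorffDist_of_mem hwB fin
        exact h1.trans (h2.trans h)
    have key : d ≤ max (dist z₀ c') (dist c' c) :=
      IsUltrametricDist.dist_triangle_max z₀ c' c
    have k1 : dist z₀ c' ≤ d / 2 := hall z₀ hz₀B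
    have k2 : dist c' c ≤ d / 2 := by rw [dist_comm]; exact hall c hcB
    have : d ≤ d / 2 := key.trans (max_le k1 k2)
    linarith

end Helpers

/-- For an ultrametric space `X`, the set of closed balls of strictly positive radius is the
unique dense discrete subset of the space of all closed balls with the Hausdorff metric. -/
theorem stmt15 {X : Type*} [MetricSpace X]
    (hu : ∀ x y z : X, dist x y ≤ max (dist x z) (dist z y)) :
    (∀ B ∈ ClosedBalls X, ∀ ε > (0 : ℝ), ∃ B' ∈ PosBalls X, Metric.hausdorffDist B B' < ε) ∧
    (∀ B ∈ PosBalls X, ∃ r > (0 : ℝ),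
        ∀ B' ∈ PosBalls X, Metric.hausdorffDist B B' ≤ r → B' = B) ∧
    (∀ Bs ⊆ ClosedBalls X,
      (∀ B ∈ ClosedBalls X, ∀ ε > (0 : ℝ), ∃ B' ∈ Bs, Metric.hausdorffDist B B' < ε) →
      (∀ B ∈ Bs, ∃ r > (0 : ℝ), ∀ B' ∈ Bs, Metric.hausdorffDist B B' ≤ r → B' = B) →
      Bs = PosBalls X) := by
  haveI : IsUltrametricDist X := ⟨fun x y z => hu x z y⟩
  -- density of PosBalls in ClosedBalls
  have density : ∀ B ∈ ClosedBalls X, ∀ ε > (0 : ℝ),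
      ∃ B' ∈ PosBalls X, Metric.hausdorffDist B B' < ε := by
    rintro B ⟨c, r, hr, rfl⟩ ε hε
    rcases le_or_gt (ε / 2) r with hcase | hcase
    · exact ⟨Metric.closedBall c r, ⟨c, r, by linarith, rfl⟩,
        by simpa using hε⟩
    · refine ⟨Metric.closedBall c (ε / 2), ⟨c, ε / 2, by linarith, rfl⟩, ?_⟩
      have hle : Metric.hausdorffDist (Metric.closedBall c r)
          (Metric.closedBall c (ε / 2)) ≤ ε / 2 := by
        apply Metric.hausdorffDist_le_of_mem_dist (by linarith)
        · intro x hx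
          exact ⟨x, Metric.closedBall_subset_closedBall hcase.le hx, by simp; linarith⟩
        · intro y hy
          exact ⟨c, Metric.mem_closedBall_self hr, by simpa [Metric.mem_closedBall] using hy⟩
      linarith
  refine ⟨density, ?_, ?_⟩
  · -- discreteness of PosBalls
    rintro B ⟨c, r, hr, rfl⟩
    obtain ⟨ρ, hρ, hiso⟩ := my_ball_isolated c hr
    exact ⟨ρ, hρ, by rintro B' ⟨c', r', hr', rfl⟩ h; exact hiso c' r' hr'.le h⟩
  · -- uniqueness
    intro Bs hBsub hdense hdisc
    apply subset_antisymm
    · -- Bs ⊆ PosBalls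
      intro B hB
      obtain ⟨c, r, hr, rfl⟩ := hBsub hB
      rcases hr.lt_or_eq with hr0 | hr0
      · exact ⟨c, r, hr0, rfl⟩
      subst hr0
      by_contra hBpos
      -- every ball of positive radius around c contains a point at positive distance
      have hnear : ∀ t > (0 : ℝ), ∃ z, dist z c ≤ t ∧ 0 < dist z c := by
        intro t ht
        by_contra hno
        push_neg at hno
        apply hBpos
        refine ⟨c, t, ht, ?_⟩
        ext z
        simp only [Metric.mem_closedBall]
        constructor
        · intro hz; linarith [dist_nonneg (x := z) (y := c)]
        · intro hz
          rcases eq_or_lt_of_le (dist_nonneg (x := z) (y := c)) with h0 | h0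
          · linarith
          · exact absurd (hno z hz) (not_le.2 h0)
      obtain ⟨ρ, hρ, hiso⟩ := hdisc _ hB
      obtain ⟨z, hz1, hz2⟩ := hnear (ρ / 2) (by linarith)
      set δ := dist z c with hδ
      set B₂ := Metric.closedBall c δ with hB₂
      have hδρ : δ ≤ ρ / 2 := hz1
      have hB₂Cl : B₂ ∈ ClosedBalls X := ⟨c, δ, hz2.le, rfl⟩
      obtain ⟨B'', hB''mem, hB''dist⟩ := hdense B₂ hB₂Cl (δ / 2) (by linarith)
      obtain ⟨c'', r'', hr'', hB''eq⟩ := hBsub hB''mem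
      -- hausdorffDist between {c} and B₂ is at most δ
      have hBB₂ : Metric.hausdorffDist (Metric.closedBall c 0) B₂ ≤ δ := by
        apply Metric.hausdorffDist_le_of_mem_dist hz2.le
        · intro x hx
          simp only [Metric.mem_closedBall] at hx
          exact ⟨c, Metric.mem_closedBall_self hz2.le, by linarith⟩
        · intro y hy
          exact ⟨c, Metric.mem_closedBall_self le_rfl,
            by simpa [hB₂, Metric.mem_closedBall] using hy⟩
      have fin12 : EMetric.hausdorffEdist (Metric.closedBall c 0) B₂ ≠ ⊤ :=
        my_finEdist c c le_rfl hz2.le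
      have htri : Metric.hausdorffDist (Metric.closedBall c 0) B'' ≤ ρ := by
        have := Metric.hausdorffDist_triangle (u := B'') fin12
        nlinarith [Metric.hausdorffDist_nonneg (s := B₂) (t := B'')]
      have hB''B : B'' = Metric.closedBall c 0 := hiso B'' hB''mem htri
      -- but B₂ is not within δ/2 of {c}
      rw [hB''B] at hB''dist
      have hzB₂ : z ∈ B₂ := Metric.mem_closedBall.2 le_rfl
      have hzout : z ∉ Metric.closedBall c 0 := fun h =>
        hz2.not_ge (Metric.mem_closedBall.1 h)
      have h1 : δ ≤ Metric.infDist z (Metric.closedBall c 0) :=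
        my_infDist_out le_rfl hzout
      have fin21 : EMetric.hausdorffEdist B₂ (Metric.closedBall c 0) ≠ ⊤ :=
        my_finEdist c c hz2.le le_rfl
      have h2 : Metric.infDist z (Metric.closedBall c 0) ≤
          Metric.hausdorffDist B₂ (Metric.closedBall c 0) :=
        Metric.infDist_le_hausdorffDist_of_mem hzB₂ fin21
      linarith [h1.trans h2]
    · -- PosBalls ⊆ Bs
      rintro B ⟨c, r, hr, rfl⟩
      obtain ⟨ρ, hρ, hiso⟩ := my_ball_isolated c hr
      obtain ⟨B'', hB''mem, hB''dist⟩ := hdense _ ⟨c, r, hr.le, rfl⟩ ρ hρ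
      obtain ⟨c'', r'', hr'', rfl⟩ := hBsub hB''mem
      rwa [← hiso c'' r'' hr'' hB''dist.le]
end

section
/- Let (X,d) be an ultrametric space. Then (X,d) is a discrete metric space (every point isolated) if and only if the space (B̄_X, d_H) of closed balls with the Hausdorff metric is discrete. -/
/-- In an ultrametric, a point outside a closed ball is at distance at least
`dist p q` from every point of the ball. -/
lemma ultra_dist_ball {X : Type*} [MetricSpace X]
    (hu : ∀ x y z : X, dist x y ≤ max (dist x z) (dist z y))
    {p q y : X} {s : ℝ} (hp : s < dist p q) (hy : y ∈ Metric.closedBall q s) :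
    dist p q ≤ dist p y := by
  have h1 : dist y q ≤ s := Metric.mem_closedBall.1 hy
  have h2 := hu p q y
  rcases le_max_iff.1 h2 with h | h
  · exact h
  · linarith

/-- An ultrametric space is discrete iff its space of closed balls with the Hausdorff
metric is discrete. -/
theorem stmt16 {X : Type*} [MetricSpace X]
    (hu : ∀ x y z : X, dist x y ≤ max (dist x z) (dist z y)) :
    (∀ x : X, ∃ r > (0 : ℝ), ∀ y : X, dist x y ≤ r → y = x) ↔
      (∀ B ∈ ClosedBalls X, ∃ r > (0 : ℝ),
        ∀ B' ∈ ClosedBalls X, Metric.hausdorffDist B B' ≤ r → B' = B) := by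
  constructor
  · intro h B hB
    obtain ⟨c, r, hr, rfl⟩ := hB
    obtain ⟨ρ, hρ, hiso⟩ := h c
    refine ⟨ρ, hρ, ?_⟩
    rintro B' ⟨c', r', hr', rfl⟩ hd
    have hBne : (Metric.closedBall c r).Nonempty := Metric.nonempty_closedBall.2 hr
    have hB'ne : (Metric.closedBall c' r').Nonempty := Metric.nonempty_closedBall.2 hr'
    have hfin : EMetric.hausdorffEdist (Metric.closedBall c r) (Metric.closedBall c' r') ≠ ⊤ :=
      Metric.hausdorffEdist_ne_top_of_nonempty_of_bounded hBne hB'ne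
        Metric.isBounded_closedBall Metric.isBounded_closedBall
    have hfin' : EMetric.hausdorffEdist (Metric.closedBall c' r') (Metric.closedBall c r) ≠ ⊤ := by
      unfold EMetric.hausdorffEdist at hfin ⊢; rwa [Metric.hausdorffEDist_comm]
    -- first: B' ⊆ B
    have sub1 : Metric.closedBall c' r' ⊆ Metric.closedBall c r := by
      intro b' hb'
      by_contra hb
      have h1 : r < dist b' c := lt_of_not_ge (fun hle => hb (Metric.mem_closedBall.2 hle))
      have h2 : ρ < dist b' c := by
        by_contra hle
        push_neg at hle
        have : b' = c := hiso b' (by rwa [dist_comm])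
        rw [this, dist_self] at h1; linarith
      have hinf : Metric.infDist b' (Metric.closedBall c r)
          ≤ Metric.hausdorffDist (Metric.closedBall c' r') (Metric.closedBall c r) :=
        Metric.infDist_le_hausdorffDist_of_mem hb' hfin'
      rw [Metric.hausdorffDist_comm] at hinf
      have hlt : Metric.infDist b' (Metric.closedBall c r) < dist b' c := by linarith
      obtain ⟨y, hy, hy2⟩ := (Metric.infDist_lt_iff hBne).1 hlt
      exact absurd hy2 (not_lt.2 (ultra_dist_ball hu h1 hy))
    -- second: B ⊆ B'
    have sub2 : Metric.closedBall c r ⊆ Metric.closedBall c' r' := by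
      by_cases hc : c ∈ Metric.closedBall c' r'
      · intro b hb
        by_contra hb'
        have h1 : r' < dist b c' := lt_of_not_ge (fun hle => hb' (Metric.mem_closedBall.2 hle))
        have hbc : b ≠ c := fun he => hb' (he ▸ hc)
        have h2 : ρ < dist b c := by
          by_contra hle
          push_neg at hle
          exact hbc (hiso b (by rwa [dist_comm]))
        have hcc' : dist c c' ≤ r' := Metric.mem_closedBall.1 hc
        have h3 : dist b c ≤ dist b c' := by
          have := hu b c c'
          rcases le_max_iff.1 this with h | h
          · exact h
          · rw [dist_comm c' c] at h; linarith
        have hinf : Metric.infDist b (Metric.closedBall c' r')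
            ≤ Metric.hausdorffDist (Metric.closedBall c r) (Metric.closedBall c' r') :=
          Metric.infDist_le_hausdorffDist_of_mem hb hfin
        have hlt : Metric.infDist b (Metric.closedBall c' r') < dist b c' := by linarith
        obtain ⟨y, hy, hy2⟩ := (Metric.infDist_lt_iff hB'ne).1 hlt
        exact absurd hy2 (not_lt.2 (ultra_dist_ball hu h1 hy))
      · exfalso
        have h1 : r' < dist c c' := lt_of_not_ge (fun hle => hc (Metric.mem_closedBall.2 hle))
        have h2 : ρ < dist c c' := by
          by_contra hle
          push_neg at hle
          have : c' = c := hiso c' hle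
          rw [this, dist_self] at h1; linarith
        have hcB : c ∈ Metric.closedBall c r := Metric.mem_closedBall_self hr
        have hinf : Metric.infDist c (Metric.closedBall c' r')
            ≤ Metric.hausdorffDist (Metric.closedBall c r) (Metric.closedBall c' r') :=
          Metric.infDist_le_hausdorffDist_of_mem hcB hfin
        have hlt : Metric.infDist c (Metric.closedBall c' r') < dist c c' := by linarith
        obtain ⟨y, hy, hy2⟩ := (Metric.infDist_lt_iff hB'ne).1 hlt
        exact absurd hy2 (not_lt.2 (ultra_dist_ball hu h1 hy))
    exact Set.Subset.antisymm sub1 sub2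
  · intro h x
    obtain ⟨ε, hε, h2⟩ := h (Metric.closedBall x 0) ⟨x, 0, le_refl 0, rfl⟩
    refine ⟨ε, hε, ?_⟩
    intro y hy
    have hd : Metric.hausdorffDist (Metric.closedBall x 0) (Metric.closedBall y 0) ≤ ε := by
      rw [Metric.closedBall_zero, Metric.closedBall_zero]
      refine le_trans (Metric.hausdorffDist_le_of_mem_dist dist_nonneg ?_ ?_) hy
      · rintro z rfl
        exact ⟨y, rfl, le_refl _⟩
      · rintro z rfl
        exact ⟨x, rfl, le_of_eq (dist_comm z x)⟩
    have := h2 (Metric.closedBall y 0) ⟨y, 0, le_refl 0, rfl⟩ hd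
    rw [Metric.closedBall_zero, Metric.closedBall_zero] at this
    exact Set.singleton_eq_singleton_iff.1 this
end

section
/- Let (X,d) be an ultrametric space. Then (X,d) is metrically discrete (i.e., there exists t > 0 such that d(x,y) ≥ t for all distinct x, y) if and only if (B̄_X, d_H) is metrically discrete. -/
/-- If every pair of distinct points is at distance at least `t`, then a point of `s`
not belonging to `u` is at Hausdorff distance at least `t` from `u`. -/
lemma aux_key {X : Type*} [MetricSpace X] {t : ℝ} (h : ∀ x y : X, x ≠ y → t ≤ dist x y)
    {s u : Set X} (hfin : EMetric.hausdorffEdist s u ≠ ⊤) (hu : u.Nonempty)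
    {x : X} (hx : x ∈ s) (hxu : x ∉ u) : t ≤ Metric.hausdorffDist s u := by
  refine le_trans ?_ (Metric.infDist_le_hausdorffDist_of_mem hx hfin)
  refine le_of_not_gt fun hlt => ?_
  rcases (Metric.infDist_lt_iff hu).1 hlt with ⟨y, hy, hd⟩
  exact absurd (h x y (by rintro rfl; exact hxu hy)) (not_le.2 hd)

/-- An ultrametric space is metrically discrete iff its space of closed balls with the
Hausdorff metric is metrically discrete. -/
theorem stmt17 {X : Type*} [MetricSpace X]
    (hu : ∀ x y z : X, dist x y ≤ max (dist x z) (dist z y)) :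
    (∃ t > (0 : ℝ), ∀ x y : X, x ≠ y → t ≤ dist x y) ↔
      (∃ t > (0 : ℝ), ∀ B₁ ∈ ClosedBalls X, ∀ B₂ ∈ ClosedBalls X,
        B₁ ≠ B₂ → t ≤ Metric.hausdorffDist B₁ B₂) := by
  constructor
  · rintro ⟨t, ht, h⟩
    refine ⟨t, ht, ?_⟩
    rintro B₁ ⟨c₁, r₁, hr₁, rfl⟩ B₂ ⟨c₂, r₂, hr₂, rfl⟩ hne
    have hfin : EMetric.hausdorffEdist (Metric.closedBall c₁ r₁) (Metric.closedBall c₂ r₂) ≠ ⊤ :=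
      Metric.hausdorffEdist_ne_top_of_nonempty_of_bounded
        (Metric.nonempty_closedBall.2 hr₁) (Metric.nonempty_closedBall.2 hr₂)
        Metric.isBounded_closedBall Metric.isBounded_closedBall
    by_cases hsub : Metric.closedBall c₁ r₁ ⊆ Metric.closedBall c₂ r₂
    · have hsub2 : ¬ Metric.closedBall c₂ r₂ ⊆ Metric.closedBall c₁ r₁ := fun h2 =>
        hne (Set.Subset.antisymm hsub h2)
      rcases Set.not_subset.1 hsub2 with ⟨x, hx1, hx2⟩
      rw [Metric.hausdorffDist_comm]
      exact aux_key h (by unfold EMetric.hausdorffEdist at hfin ⊢; rwa [EMetric.hausdorffEdist_comm] at hfin)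
        (Metric.nonempty_closedBall.2 hr₁) hx1 hx2
    · rcases Set.not_subset.1 hsub with ⟨x, hx1, hx2⟩
      exact aux_key h hfin (Metric.nonempty_closedBall.2 hr₂) hx1 hx2
  · rintro ⟨t, ht, h⟩
    refine ⟨t, ht, fun x y hxy => ?_⟩
    have hb : ∀ z : X, ({z} : Set X) ∈ ClosedBalls X := fun z =>
      ⟨z, 0, le_refl 0, (Metric.closedBall_zero).symm⟩
    have hne : ({x} : Set X) ≠ {y} := by
      simpa [Set.singleton_eq_singleton_iff] using hxy
    have := h _ (hb x) _ (hb y) hne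
    refine le_trans this ?_
    refine Metric.hausdorffDist_le_of_mem_dist dist_nonneg ?_ ?_
    · rintro a rfl; exact ⟨y, rfl, le_refl _⟩
    · rintro a rfl; exact ⟨x, rfl, by rw [dist_comm]⟩
end

section
/- Let (X,d) be an ultrametric space. Then (X,d) is complete if and only if the space (B̄_X, d_H) of all closed balls with the Hausdorff metric is complete. Moreover, B̄_X is a closed subset of the space of all nonempty closed bounded subsets of X with the Hausdorff metric. -/
open Metric EMetric Bornology Filter
open scoped ENNReal

section Aux

variable {X : Type*} [MetricSpace X]

/-- In an ultrametric space, the diameter of a closed ball is at most its radius. -/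
lemma aux_diam_le (hu : ∀ x y z : X, dist x y ≤ max (dist x z) (dist z y))
    (c : X) {r : ℝ} (hr : 0 ≤ r) : Metric.diam (Metric.closedBall c r) ≤ r := by
  apply Metric.diam_le_of_forall_dist_le hr
  intro x hx y hy
  exact le_trans (hu x y c)
    (max_le (Metric.mem_closedBall.1 hx) (by rw [dist_comm]; exact Metric.mem_closedBall.1 hy))

/-- If a nonempty bounded set is at Hausdorff distance `< ε` of a closed ball and contains
two points at distance `≥ ε`, then it is contained in the ball. -/
lemma aux_subset (hu : ∀ x y z : X, dist x y ≤ max (dist x z) (dist z y))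
    {A : Set X} (hA : A.Nonempty) (hAb : IsBounded A)
    {c' : X} {s' ε : ℝ} (hs' : 0 ≤ s')
    (hd : hausdorffDist A (Metric.closedBall c' s') < ε)
    {y z : X} (hy : y ∈ A) (hz : z ∈ A) (hyz : ε ≤ dist y z) :
    A ⊆ Metric.closedBall c' s' := by
  have hfin : hausdorffEdist A (Metric.closedBall c' s') ≠ ⊤ :=
    hausdorffEdist_ne_top_of_nonempty_of_bounded hA (Metric.nonempty_closedBall.2 hs')
      hAb Metric.isBounded_closedBall
  obtain ⟨wy, hwy, hwyd⟩ := exists_dist_lt_of_hausdorffDist_lt hy hd hfin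
  obtain ⟨wz, hwz, hwzd⟩ := exists_dist_lt_of_hausdorffDist_lt hz hd hfin
  have hww : ε ≤ dist wy wz := by
    by_contra h
    push_neg at h
    have h1 : dist y z < ε :=
      lt_of_le_of_lt (hu y z wy)
        (max_lt hwyd (lt_of_le_of_lt (hu wy z wz)
          (max_lt h (by rw [dist_comm]; exact hwzd))))
    exact absurd h1 (not_lt.2 hyz)
  have hεs' : ε ≤ s' :=
    le_trans hww (le_trans (hu wy wz c')
      (max_le (Metric.mem_closedBall.1 hwy) (by rw [dist_comm]; exact Metric.mem_closedBall.1 hwz)))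
  intro a ha
  obtain ⟨w, hw, hwd⟩ := exists_dist_lt_of_hausdorffDist_lt ha hd hfin
  exact Metric.mem_closedBall.2 (le_trans (hu a c' w)
    (max_le (le_trans hwd.le hεs') (Metric.mem_closedBall.1 hw)))

/-- A Hausdorff limit of closed balls in an ultrametric space is a closed ball. -/
lemma aux_limit (hu : ∀ x y z : X, dist x y ≤ max (dist x z) (dist z y))
    (f : ℕ → Set X) (hf : ∀ n, f n ∈ ClosedBalls X) (A : Set X)
    (hAne : A.Nonempty) (hAcl : IsClosed A) (hAbd : IsBounded A)
    (htd : Filter.Tendsto (fun n => hausdorffDist (f n) A) Filter.atTop (nhds 0)) :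
    A ∈ ClosedBalls X := by
  obtain ⟨c, hc⟩ := id hAne
  refine ⟨c, Metric.diam A, Metric.diam_nonneg, ?_⟩
  apply Set.eq_of_subset_of_subset
  · intro a ha
    exact Metric.mem_closedBall.2 (Metric.dist_le_diam_of_mem hAbd ha hc)
  · intro y hy
    have hyd : dist y c ≤ Metric.diam A := Metric.mem_closedBall.1 hy
    rcases eq_or_lt_of_le (Metric.diam_nonneg : (0:ℝ) ≤ Metric.diam A) with h0 | hpos
    · have hyc : y = c := by
        rw [← dist_le_zero]
        exact hyd.trans h0.ge
      rw [hyc]; exact hc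
    · rw [← hAcl.closure_eq, Metric.mem_closure_iff]
      intro ε hε
      set δ := min ε (Metric.diam A) / 2 with hδdef
      have hδ : 0 < δ := half_pos (lt_min hε hpos)
      have hδr : δ < Metric.diam A := by
        have h1 : δ ≤ Metric.diam A / 2 := by
          rw [hδdef]; gcongr; exact min_le_right _ _
        exact lt_of_le_of_lt h1 (half_lt_self hpos)
      have hδε : δ ≤ ε := by
        have h1 : δ ≤ ε / 2 := by
          rw [hδdef]; gcongr; exact min_le_left _ _
        exact h1.trans (half_le_self hε.le)
      obtain ⟨n, hn⟩ := (htd.eventually (gt_mem_nhds hδ)).exists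
      obtain ⟨c', s', hs', hfn⟩ := hf n
      have hfin : hausdorffEdist (f n) A ≠ ⊤ := by
        rw [hfn]
        exact hausdorffEdist_ne_top_of_nonempty_of_bounded (Metric.nonempty_closedBall.2 hs')
          ⟨c, hc⟩ Metric.isBounded_closedBall hAbd
      have hpair : ∃ p ∈ A, ∃ q ∈ A, δ ≤ dist p q := by
        by_contra h
        push_neg at h
        have h1 : Metric.diam A ≤ δ :=
          Metric.diam_le_of_forall_dist_le hδ.le fun p hp q hq => (h p hp q hq).le
        exact absurd (lt_of_le_of_lt h1 hδr) (lt_irrefl _)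
      obtain ⟨p, hp, q, hq, hpq⟩ := hpair
      have hd' : hausdorffDist A (Metric.closedBall c' s') < δ := by
        rw [hausdorffDist_comm, ← hfn]; exact hn
      have hsub : A ⊆ Metric.closedBall c' s' :=
        aux_subset hu ⟨c, hc⟩ hAbd hs' hd' hp hq hpq
      have hrs : Metric.diam A ≤ s' :=
        le_trans (Metric.diam_mono hsub Metric.isBounded_closedBall) (aux_diam_le hu c' hs')
      have hyball : y ∈ f n := by
        rw [hfn]
        exact Metric.mem_closedBall.2 (le_trans (hu y c' c)
          (max_le (hyd.trans hrs) (Metric.mem_closedBall.1 (hsub hc))))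
      have hinf : infDist y A < δ :=
        lt_of_le_of_lt (infDist_le_hausdorffDist_of_mem hyball hfin) hn
      obtain ⟨b, hb, hbd⟩ := (Metric.infDist_lt_iff ⟨c, hc⟩).1 hinf
      exact ⟨b, hb, lt_of_lt_of_le hbd hδε⟩

/-- The Hausdorff distance between singletons is the distance. -/
lemma aux_hdist_singleton (a b : X) : hausdorffDist ({a} : Set X) {b} = dist a b := by
  have hfin : hausdorffEdist ({a} : Set X) {b} ≠ ⊤ :=
    hausdorffEdist_ne_top_of_nonempty_of_bounded (Set.singleton_nonempty a)
      (Set.singleton_nonempty b) isBounded_singleton isBounded_singleton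
  apply le_antisymm
  · apply hausdorffDist_le_of_mem_dist dist_nonneg
    · intro x hx
      rw [Set.mem_singleton_iff] at hx
      exact ⟨b, Set.mem_singleton b, by rw [hx]⟩
    · intro x hx
      rw [Set.mem_singleton_iff] at hx
      exact ⟨a, Set.mem_singleton a, by rw [hx, dist_comm]⟩
  · have h1 := infDist_le_hausdorffDist_of_mem (Set.mem_singleton a) hfin
    rwa [Metric.infDist_singleton] at h1

end Aux

/-- An ultrametric space is complete iff its space of closed balls is complete with respect
to the Hausdorff distance; moreover the closed balls form a closed subset of the space of
nonempty closed bounded subsets with the Hausdorff distance. -/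
theorem stmt18 {X : Type*} [MetricSpace X]
    (hu : ∀ x y z : X, dist x y ≤ max (dist x z) (dist z y)) :
    (CompleteSpace X ↔
      ∀ f : ℕ → Set X, (∀ n, f n ∈ ClosedBalls X) →
        (∀ ε > (0 : ℝ), ∃ N : ℕ, ∀ m ≥ N, ∀ n ≥ N, Metric.hausdorffDist (f m) (f n) < ε) →
        ∃ B ∈ ClosedBalls X,
          Filter.Tendsto (fun n => Metric.hausdorffDist (f n) B) Filter.atTop (nhds 0)) ∧
    (∀ f : ℕ → Set X, (∀ n, f n ∈ ClosedBalls X) → ∀ A : Set X,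
        A.Nonempty → IsClosed A → Bornology.IsBounded A →
        Filter.Tendsto (fun n => Metric.hausdorffDist (f n) A) Filter.atTop (nhds 0) →
        A ∈ ClosedBalls X) := by
  constructor
  · constructor
    · -- CompleteSpace X → ball-space completeness
      intro hcomp f hballs hcauchy
      have hcl : ∀ n, IsClosed (f n) := fun n => by
        obtain ⟨c, r, _, h⟩ := hballs n; rw [h]; exact Metric.isClosed_closedBall
      have hbd : ∀ n, IsBounded (f n) := fun n => by
        obtain ⟨c, r, _, h⟩ := hballs n; rw [h]; exact Metric.isBounded_closedBall
      have hne : ∀ n, (f n).Nonempty := fun n => by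
        obtain ⟨c, r, hr, h⟩ := hballs n; rw [h]; exact Metric.nonempty_closedBall.2 hr
      set g : ℕ → TopologicalSpace.Closeds X := fun n => ⟨f n, hcl n⟩ with hg
      have hfin : ∀ m n, hausdorffEdist (f m) (f n) ≠ ⊤ := fun m n =>
        hausdorffEdist_ne_top_of_nonempty_of_bounded (hne m) (hne n) (hbd m) (hbd n)
      have hgc : CauchySeq g := by
        rw [EMetric.cauchySeq_iff]
        intro ε hε
        have hmt : min ε 1 ≠ ⊤ := ne_top_of_le_ne_top ENNReal.one_ne_top (min_le_right _ _)
        have hε' : 0 < (min ε 1).toReal :=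
          ENNReal.toReal_pos (ne_of_gt (lt_min hε zero_lt_one)) hmt
        obtain ⟨N, hN⟩ := hcauchy _ hε'
        refine ⟨N, fun m hm n hn => ?_⟩
        have h1 : edist (g m) (g n) = hausdorffEdist (f m) (f n) := EMetric.Closeds.edist_eq
        rw [h1]
        have h2 : hausdorffEdist (f m) (f n) < min ε 1 :=
          (ENNReal.toReal_lt_toReal (hfin m n) hmt).1 (hN m hm n hn)
        exact lt_of_lt_of_le h2 (min_le_left _ _)
      obtain ⟨L, hL⟩ := cauchySeq_tendsto_of_complete hgc
      have hLe : ∀ ε : ℝ≥0∞, 0 < ε → ∃ N, ∀ n ≥ N, edist (g n) L < ε := by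
        rw [EMetric.tendsto_atTop] at hL
        exact fun ε hε => hL ε hε
      obtain ⟨N₁, hN₁⟩ := hLe 1 zero_lt_one
      have hfinL : hausdorffEdist (f N₁) (L : Set X) ≠ ⊤ := by
        have h1 := hN₁ N₁ le_rfl
        rw [EMetric.Closeds.edist_eq] at h1
        exact (h1.trans ENNReal.one_lt_top).ne
      have hLne : (L : Set X).Nonempty := nonempty_of_hausdorffEdist_ne_top (hne N₁) hfinL
      have hLbd : IsBounded (L : Set X) := by
        obtain ⟨c, r, hr, hN₁eq⟩ := hballs N₁
        set D := hausdorffDist (f N₁) (L : Set X) with hD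
        apply (Metric.isBounded_closedBall (x := c) (r := r + (D + 1))).subset
        intro y hy
        obtain ⟨w, hw, hwd⟩ := exists_dist_lt_of_hausdorffDist_lt' hy (lt_add_one D) hfinL
        rw [hN₁eq] at hw
        have h1 : dist y c ≤ dist y w + dist w c := dist_triangle y w c
        have h2 : dist w c ≤ r := Metric.mem_closedBall.1 hw
        have h3 : dist y w < D + 1 := by rw [dist_comm]; exact hwd
        exact Metric.mem_closedBall.2 (by linarith)
      have htdL : Filter.Tendsto (fun n => hausdorffDist (f n) (L : Set X))
          Filter.atTop (nhds 0) := by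
        rw [Metric.tendsto_atTop]
        intro ε hε
        obtain ⟨N, hN⟩ := hLe (min (ENNReal.ofReal ε) 1)
          (lt_min (ENNReal.ofReal_pos.2 hε) zero_lt_one)
        refine ⟨N, fun n hn => ?_⟩
        have h1 := hN n hn
        rw [EMetric.Closeds.edist_eq] at h1
        have h2 : hausdorffEdist (f n) (L : Set X) < ENNReal.ofReal ε :=
          lt_of_lt_of_le h1 (min_le_left _ _)
        have h3 : hausdorffDist (f n) (L : Set X) < ε := ENNReal.toReal_lt_of_lt_ofReal h2
        rw [Real.dist_eq, sub_zero, abs_of_nonneg hausdorffDist_nonneg]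
        exact h3
      exact ⟨(L : Set X), aux_limit hu f hballs (L : Set X) hLne L.2 hLbd htdL, htdL⟩
    · -- ball-space completeness → CompleteSpace X
      intro h
      apply Metric.complete_of_cauchySeq_tendsto
      intro u hu'
      set f : ℕ → Set X := fun n => Metric.closedBall (u n) 0 with hf
      have hballs : ∀ n, f n ∈ ClosedBalls X := fun n => ⟨u n, 0, le_refl 0, rfl⟩
      have hsing : ∀ n, f n = {u n} := fun n => Metric.closedBall_zero (x := u n)
      have hdist : ∀ m n, hausdorffDist (f m) (f n) = dist (u m) (u n) := fun m n => by
        rw [hsing, hsing, aux_hdist_singleton]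
      have hcauchy : ∀ ε > (0 : ℝ), ∃ N, ∀ m ≥ N, ∀ n ≥ N, hausdorffDist (f m) (f n) < ε := by
        intro ε hε
        obtain ⟨N, hN⟩ := Metric.cauchySeq_iff.1 hu' ε hε
        exact ⟨N, fun m hm n hn => by rw [hdist]; exact hN m hm n hn⟩
      obtain ⟨B, ⟨c, r, hr, hB⟩, htd⟩ := h f hballs hcauchy
      have hcB : c ∈ B := by rw [hB]; exact Metric.mem_closedBall_self hr
      have hfinB : ∀ n, hausdorffEdist B (f n) ≠ ⊤ := fun n => by
        rw [hB, hsing]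
        exact hausdorffEdist_ne_top_of_nonempty_of_bounded (Metric.nonempty_closedBall.2 hr)
          (Set.singleton_nonempty _) Metric.isBounded_closedBall isBounded_singleton
      have hbound : ∀ n, dist (u n) c ≤ hausdorffDist (f n) B := by
        intro n
        have h1 : infDist c (f n) ≤ hausdorffDist B (f n) :=
          infDist_le_hausdorffDist_of_mem hcB (hfinB n)
        rw [hausdorffDist_comm] at h1
        calc dist (u n) c = infDist c (f n) := by
              rw [hsing n, Metric.infDist_singleton, dist_comm]
          _ ≤ hausdorffDist (f n) B := h1
      refine ⟨c, tendsto_iff_dist_tendsto_zero.2 ?_⟩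
      exact squeeze_zero (fun n => dist_nonneg) hbound htd
  · intro f hf A hAne hAcl hAbd htd
    exact aux_limit hu f hf A hAne hAcl hAbd htd
end

section
/- Let (X,d) be an ultrametric space. Then (X,d) is totally bounded if and only if (B̄_X, d_H) is totally bounded; consequently (X,d) is compact if and only if (B̄_X, d_H) is compact. -/
open Metric Set Filter

section Aux

variable {X : Type*} [MetricSpace X]

lemma ultra_ball_subset (hu : ∀ x y z : X, dist x y ≤ max (dist x z) (dist z y))
    {t : Set X} {c c' : X} {r r' δ : ℝ} (hr : δ ≤ r) (hr' : δ ≤ r')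
    (hcov : ∀ y : X, ∃ n ∈ t, dist y n < δ)
    (hcap : Metric.closedBall c r ∩ t = Metric.closedBall c' r' ∩ t) :
    Metric.closedBall c r ⊆ Metric.closedBall c' r' := by
  intro y hy
  obtain ⟨n, hnt, hyn⟩ := hcov y
  have hy' : dist y c ≤ r := mem_closedBall.1 hy
  have hnB : n ∈ Metric.closedBall c r := by
    rw [mem_closedBall]
    calc dist n c ≤ max (dist n y) (dist y c) := hu n c y
    _ ≤ r := max_le ((dist_comm n y ▸ hyn.le).trans hr) hy'
  have hnB' : n ∈ Metric.closedBall c' r' ∩ t := hcap ▸ ⟨hnB, hnt⟩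
  rw [mem_closedBall]
  calc dist y c' ≤ max (dist y n) (dist n c') := hu y c' n
  _ ≤ r' := max_le (hyn.le.trans hr') (mem_closedBall.1 hnB'.1)

/-- In a totally bounded ultrametric space, there are only finitely many distinct
closed balls of radius at least `δ`. -/
lemma ultra_balls_finite (hu : ∀ x y z : X, dist x y ≤ max (dist x z) (dist z y))
    (htb : TotallyBounded (Set.univ : Set X)) {δ : ℝ} (hδ : 0 < δ) :
    {B : Set X | ∃ c r, δ ≤ r ∧ B = Metric.closedBall c r}.Finite := by
  obtain ⟨t, htf, htc⟩ := Metric.totallyBounded_iff.1 htb δ hδ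
  have hcov : ∀ y : X, ∃ n ∈ t, dist y n < δ := by
    intro y
    have := htc (mem_univ y)
    simp only [mem_iUnion, mem_ball, exists_prop] at this
    exact this
  apply Set.Finite.of_finite_image (f := fun B => B ∩ t)
  · exact htf.finite_subsets.subset (by rintro u ⟨B, _, rfl⟩; exact inter_subset_right)
  · rintro B₁ ⟨c₁, r₁, hr₁, rfl⟩ B₂ ⟨c₂, r₂, hr₂, rfl⟩ h
    exact subset_antisymm (ultra_ball_subset hu hr₁ hr₂ hcov h)
      (ultra_ball_subset hu hr₂ hr₁ hcov h.symm)

lemma hED_ne_top {c c' : X} {r r' : ℝ} (hr : 0 ≤ r) (hr' : 0 ≤ r') :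
    EMetric.hausdorffEdist (Metric.closedBall c r) (Metric.closedBall c' r') ≠ ⊤ :=
  Metric.hausdorffEdist_ne_top_of_nonempty_of_bounded
    (nonempty_closedBall.2 hr) (nonempty_closedBall.2 hr')
    isBounded_closedBall isBounded_closedBall

/-- Extract a strict monotone enumeration from an infinite set of naturals. -/
lemma exists_strictMono_mem {T : Set ℕ} (hT : T.Infinite) :
    ∃ φ : ℕ → ℕ, StrictMono φ ∧ ∀ n, φ n ∈ T := by
  have h : ∀ k : ℕ, ∃ m ∈ T, k < m := fun k => hT.exists_gt k
  choose next hmem hlt using h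
  refine ⟨fun n => Nat.rec (next 0) (fun _ ih => next ih) n, ?_, ?_⟩
  · exact strictMono_nat_of_lt_succ fun n => hlt _
  · intro n; cases n <;> exact hmem _

end Aux

/-- An ultrametric space is totally bounded iff its space of closed balls with the Hausdorff
distance is totally bounded; consequently it is compact iff the space of closed balls is
compact (compactness phrased sequentially). -/
theorem stmt19 {X : Type*} [MetricSpace X]
    (hu : ∀ x y z : X, dist x y ≤ max (dist x z) (dist z y)) :
    (TotallyBounded (Set.univ : Set X) ↔
      ∀ ε > (0 : ℝ), ∃ F : Set (Set X), F.Finite ∧ F ⊆ ClosedBalls X ∧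
        ∀ B ∈ ClosedBalls X, ∃ B' ∈ F, Metric.hausdorffDist B B' < ε) ∧
    (CompactSpace X ↔
      ∀ f : ℕ → Set X, (∀ n, f n ∈ ClosedBalls X) →
        ∃ B ∈ ClosedBalls X, ∃ φ : ℕ → ℕ, StrictMono φ ∧
          Filter.Tendsto (fun n => Metric.hausdorffDist (f (φ n)) B) Filter.atTop (nhds 0)) := by
  constructor
  · -- total boundedness
    constructor
    · intro htb ε hε
      obtain ⟨t, htf, htc⟩ := Metric.totallyBounded_iff.1 htb ε hε
      refine ⟨{B : Set X | ∃ c r, ε ≤ r ∧ B = Metric.closedBall c r} ∪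
          (fun n => ({n} : Set X)) '' t, ?_, ?_, ?_⟩
      · exact (ultra_balls_finite hu htb hε).union (htf.image _)
      · rintro B (⟨c, r, hr, rfl⟩ | ⟨n, hn, rfl⟩)
        · exact ⟨c, r, (le_of_lt hε).trans hr, rfl⟩
        · exact ⟨n, 0, le_refl 0, Metric.closedBall_zero.symm⟩
      · rintro B ⟨c, r, hr, rfl⟩
        by_cases hcase : ε ≤ r
        · refine ⟨Metric.closedBall c r, Or.inl ⟨c, r, hcase, rfl⟩, ?_⟩
          rw [Metric.hausdorffDist_self_zero]; exact hε
        · push_neg at hcase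
          obtain ⟨n, hn, hcn⟩ : ∃ n ∈ t, dist c n < ε := by
            have := htc (mem_univ c)
            simp only [mem_iUnion, mem_ball, exists_prop] at this
            exact this
          refine ⟨{n}, Or.inr ⟨n, hn, rfl⟩, ?_⟩
          have hρ : Metric.hausdorffDist (Metric.closedBall c r) {n} ≤ max r (dist c n) := by
            apply Metric.hausdorffDist_le_of_mem_dist (le_max_of_le_left hr)
            · intro x hx
              refine ⟨n, rfl, ?_⟩
              calc dist x n ≤ max (dist x c) (dist c n) := hu x n c
              _ ≤ max r (dist c n) := max_le_max (mem_closedBall.1 hx) le_rfl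
            · intro y hy
              rw [mem_singleton_iff] at hy
              refine ⟨c, mem_closedBall_self hr, ?_⟩
              rw [hy, dist_comm]
              exact le_max_right r (dist c n)
          exact lt_of_le_of_lt hρ (max_lt hcase hcn)
    · intro h
      rcases isEmpty_or_nonempty X with hX | hX
      · rw [Set.univ_eq_empty_iff.2 hX]; exact totallyBounded_empty
      · obtain ⟨x₀⟩ := hX
        rw [Metric.totallyBounded_iff]
        intro ε hε
        obtain ⟨F, hFfin, hFsub, happrox⟩ := h ε hε
        have hne : ∀ B : Set X, ∃ x : X, B ∈ F → x ∈ B := by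
          intro B
          by_cases hB : B ∈ F
          · obtain ⟨c, r, hr, rfl⟩ := hFsub hB
            exact ⟨c, fun _ => mem_closedBall_self hr⟩
          · exact ⟨x₀, fun hc => absurd hc hB⟩
        choose g hg using hne
        refine ⟨g '' F, hFfin.image g, fun x _ => ?_⟩
        obtain ⟨B', hB'F, hd⟩ := happrox (Metric.closedBall x 0) ⟨x, 0, le_refl 0, rfl⟩
        obtain ⟨c', r', hr', hB'eq⟩ := hFsub hB'F
        have hfin : EMetric.hausdorffEdist (Metric.closedBall x 0) B' ≠ ⊤ := by
          rw [hB'eq]; exact hED_ne_top (le_refl 0) hr'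
        obtain ⟨z, hz, hdz⟩ :=
          Metric.exists_dist_lt_of_hausdorffDist_lt' (hg B' hB'F) hd hfin
        simp only [Metric.closedBall_zero, mem_singleton_iff] at hz
        subst hz
        simp only [mem_iUnion, mem_ball, exists_prop]
        exact ⟨g B', mem_image_of_mem g hB'F, hdz⟩
  · -- compactness
    constructor
    · intro hcomp f hf
      haveI := hcomp
      choose c r hr hfr using hf
      have htb : TotallyBounded (Set.univ : Set X) := isCompact_univ.totallyBounded
      by_cases H : ∃ δ > (0 : ℝ), {n | δ ≤ r n}.Infinite
      · obtain ⟨δ, hδ, hinf⟩ := H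
        have hBfin := ultra_balls_finite hu htb hδ
        have hfiber : ∃ B ∈ {B : Set X | ∃ c r, δ ≤ r ∧ B = Metric.closedBall c r},
            {n | δ ≤ r n ∧ f n = B}.Infinite := by
          by_contra hcon
          push_neg at hcon
          have : {n | δ ≤ r n} ⊆ ⋃ B ∈ {B : Set X | ∃ c r, δ ≤ r ∧ B = Metric.closedBall c r},
              {n | δ ≤ r n ∧ f n = B} := by
            intro n hn
            simp only [mem_iUnion, exists_prop]
            exact ⟨f n, ⟨c n, r n, hn, hfr n⟩, hn, rfl⟩
          exact hinf (Set.Finite.subset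
            (Set.Finite.biUnion hBfin fun B hB => hcon B hB) this)
        obtain ⟨B, ⟨cB, rB, hrB, hBeq⟩, hTinf⟩ := hfiber
        obtain ⟨φ, hφ, hφmem⟩ := exists_strictMono_mem hTinf
        refine ⟨B, ⟨cB, rB, hδ.le.trans hrB, hBeq⟩, φ, hφ, ?_⟩
        have : (fun n => Metric.hausdorffDist (f (φ n)) B) = fun _ => 0 := by
          funext n
          rw [(hφmem n).2, Metric.hausdorffDist_self_zero]
        rw [this]
        exact tendsto_const_nhds
      · push_neg at H
        obtain ⟨a, -, φ, hφ, hconv⟩ := isCompact_univ.tendsto_subseq (fun n => mem_univ (c n))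
        refine ⟨Metric.closedBall a 0, ⟨a, 0, le_refl 0, rfl⟩, φ, hφ, ?_⟩
        have hrto : Tendsto (fun n => r (φ n)) atTop (nhds 0) := by
          have hr0 : Tendsto r atTop (nhds 0) := by
            rw [Metric.tendsto_atTop]
            intro δ hδ
            have hfin : {n | δ ≤ r n}.Finite := H δ hδ
            obtain ⟨N, hN⟩ := hfin.bddAbove
            refine ⟨N + 1, fun n hn => ?_⟩
            have hlt : r n < δ := by
              by_contra hge
              push_neg at hge
              exact absurd (hN hge) (by omega)
            rwa [Real.dist_eq, sub_zero, abs_of_nonneg (hr n)]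
          exact hr0.comp hφ.tendsto_atTop
        have hdto : Tendsto (fun n => dist (c (φ n)) a) atTop (nhds 0) := by
          have := tendsto_iff_dist_tendsto_zero.1 hconv
          exact this
        have hsum : Tendsto (fun n => r (φ n) + dist (c (φ n)) a) atTop (nhds 0) := by
          simpa using hrto.add hdto
        apply squeeze_zero (fun n => Metric.hausdorffDist_nonneg)
          (g := fun n => r (φ n) + dist (c (φ n)) a) _ hsum
        intro n
        rw [hfr (φ n)]
        apply Metric.hausdorffDist_le_of_mem_dist
          (add_nonneg (hr (φ n)) dist_nonneg)
        · intro x hx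
          refine ⟨a, mem_closedBall_self (le_refl 0), ?_⟩
          calc dist x a ≤ dist x (c (φ n)) + dist (c (φ n)) a := dist_triangle _ _ _
          _ ≤ r (φ n) + dist (c (φ n)) a := add_le_add (mem_closedBall.1 hx) le_rfl
        · intro y hy
          rw [Metric.closedBall_zero, mem_singleton_iff] at hy
          subst hy
          exact ⟨c (φ n), mem_closedBall_self (hr (φ n)),
            le_add_of_nonneg_left (hr (φ n)) |>.trans_eq' (by rw [dist_comm]) |>.trans le_rfl⟩
    · intro h
      rw [compactSpace_iff_seqCompactSpace]
      refine ⟨?_⟩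
      intro x _
      obtain ⟨B, ⟨cB, rB, hrB, hBeq⟩, φ, hφ, htend⟩ :=
        h (fun n => Metric.closedBall (x n) 0)
          (fun n => ⟨x n, 0, le_refl 0, rfl⟩)
      refine ⟨cB, mem_univ cB, φ, hφ, ?_⟩
      rw [tendsto_iff_dist_tendsto_zero]
      apply squeeze_zero (fun n => dist_nonneg)
        (g := fun n => Metric.hausdorffDist (Metric.closedBall (x (φ n)) 0) B) _ htend
      intro n
      have hfin : EMetric.hausdorffEdist B (Metric.closedBall (x (φ n)) 0) ≠ ⊤ := by
        rw [hBeq]; exact hED_ne_top hrB (le_refl 0)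
      have hmem : cB ∈ B := hBeq ▸ mem_closedBall_self hrB
      have := Metric.infDist_le_hausdorffDist_of_mem hmem hfin
      rw [Metric.closedBall_zero, Metric.infDist_singleton] at this
      calc dist ((x ∘ φ) n) cB = dist cB (x (φ n)) := dist_comm _ _
      _ ≤ Metric.hausdorffDist B (Metric.closedBall (x (φ n)) 0) := by
          rwa [Metric.closedBall_zero]
      _ = Metric.hausdorffDist (Metric.closedBall (x (φ n)) 0) B := Metric.hausdorffDist_comm
end
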